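/- arXiv:1606.06917 — 8 statements merged into one kernel-verified Lean document; each statement's English description precedes it below -/
import Mathlib

section
/- Let N ≥ 1 be an integer, η ∈ ℂ∖{0}, and suppose ξ_1,…,ξ_N ∈ ℂ satisfy the genericity condition (G) and in addition ξ_n ∉ {η/2, −η/2} for all n. Let ζ₊, ζ₋ ∈ ℂ∖{0} with ζ₊ + ζ₋ + (p−q)η ≠ 0, let Q(λ) = ∏_{b=1}^{q} (λ² − λ_b²) and P(λ) = ∏_{b=1}^{p} (λ² − μ_b²) for some λ_b, μ_b ∈ ℂ, and let t : ℂ → ℂ be an even polynomial such that for all λ ∈ ℂ: 2λ ζ₊ζ₋ t(λ) Q(λ) = Â_{ζ₊,ζ₋}(λ) Q(λ−η) − Â_{ζ₊,ζ₋}(−λ) Q(λ+η), and 2λ ζ₊ζ₋ t(λ) P(λ) = Â_{−ζ₊,−ζ₋}(λ) P(λ−η) − Â_{−ζ₊,−ζ₋}(−λ) P(λ+η). Then p + q = N and, for all λ ∈ ℂ, W_{Q,P}(λ) = 2(−1)^N (ζ₊+ζ₋+(p−q)η)(λ−η/2) a(−λ) d(λ). -/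
open Finset

/-- Bulk function `a(λ) = ∏ (λ - ξ_n + η/2)`. -/
noncomputable def aF (N : ℕ) (η : ℂ) (ξ : Fin N → ℂ) (lam : ℂ) : ℂ :=
  ∏ n, (lam - ξ n + η / 2)

/-- Bulk function `d(λ) = ∏ (λ - ξ_n - η/2)`. -/
noncomputable def dF (N : ℕ) (η : ℂ) (ξ : Fin N → ℂ) (lam : ℂ) : ℂ :=
  ∏ n, (lam - ξ n - η / 2)

/-- `Â_{ζ₊,ζ₋}(λ) = (−1)^N (2λ+η)(λ−η/2+ζ₊)(λ−η/2+ζ₋) a(λ) d(−λ)`. -/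
noncomputable def Ahat (N : ℕ) (η : ℂ) (ξ : Fin N → ℂ) (ζp ζm lam : ℂ) : ℂ :=
  (-1 : ℂ) ^ N * (2 * lam + η) * (lam - η / 2 + ζp) * (lam - η / 2 + ζm)
    * aF N η ξ lam * dF N η ξ (-lam)

/-- Genericity condition (G) on the inhomogeneity parameters. -/
def GenG (N : ℕ) (η : ℂ) (ξ : Fin N → ℂ) : Prop :=
  (∀ j, ξ j ≠ 0 ∧ ξ j ≠ η ∧ ξ j ≠ -η) ∧
  ∀ j k, j ≠ k →
    ξ j + ξ k ≠ 0 ∧ ξ j + ξ k ≠ η ∧ ξ j + ξ k ≠ -η ∧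
    ξ j - ξ k ≠ 0 ∧ ξ j - ξ k ≠ η ∧ ξ j - ξ k ≠ -η

namespace Stmt0Aux

open Polynomial

noncomputable def PR {m : ℕ} (c : ℂ) (r : Fin m → ℂ) : ℂ[X] :=
  ∏ b, ((X - C (c + r b)) * (X - C (c - r b)))

lemma PR_monic {m : ℕ} (c : ℂ) (r : Fin m → ℂ) : (PR c r).Monic :=
  monic_prod_of_monic _ _ fun b _ => (monic_X_sub_C _).mul (monic_X_sub_C _)

lemma PR_natDegree {m : ℕ} (c : ℂ) (r : Fin m → ℂ) : (PR c r).natDegree = 2 * m := by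
  unfold PR
  rw [natDegree_prod _ _ (fun b _ => mul_ne_zero (X_sub_C_ne_zero _) (X_sub_C_ne_zero _))]
  rw [Finset.sum_congr rfl (fun b _ => by
    rw [natDegree_mul (X_sub_C_ne_zero _) (X_sub_C_ne_zero _), natDegree_X_sub_C,
      natDegree_X_sub_C])]
  simp [mul_comm]

lemma PR_nextCoeff {m : ℕ} (c : ℂ) (r : Fin m → ℂ) :
    (PR c r).nextCoeff = -(2 * (m : ℂ) * c) := by
  unfold PR
  rw [Monic.nextCoeff_prod _ _ (fun b _ => (monic_X_sub_C _).mul (monic_X_sub_C _))]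
  have h : ∀ b : Fin m, nextCoeff ((X - C (c + r b)) * (X - C (c - r b))) = -(2 * c) := by
    intro b
    rw [(monic_X_sub_C _).nextCoeff_mul (monic_X_sub_C _), nextCoeff_X_sub_C,
      nextCoeff_X_sub_C]
    ring
  rw [Finset.sum_congr rfl fun b _ => h b, Finset.sum_const, card_univ, Fintype.card_fin,
    nsmul_eq_mul]
  ring

lemma PR_eval {m : ℕ} (c : ℂ) (r : Fin m → ℂ) (x : ℂ) :
    (PR c r).eval x = ∏ b, ((x - c) ^ 2 - r b ^ 2) := by
  unfold PR
  rw [eval_prod]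
  exact Finset.prod_congr rfl fun b _ => by simp; ring

lemma PR_comp {m : ℕ} (c a : ℂ) (r : Fin m → ℂ) :
    (PR c r).comp (X + C a) = PR (c - a) r := by
  unfold PR
  rw [Polynomial.prod_comp]
  refine Finset.prod_congr rfl fun b _ => ?_
  simp only [mul_comp, sub_comp, add_comp, X_comp, C_comp, map_add, map_sub]
  ring

lemma lin_coprime {a b : ℂ} (h : a ≠ b) : IsCoprime (X - C a : ℂ[X]) (X - C b) :=
  isCoprime_X_sub_C_of_isUnit_sub (isUnit_iff_ne_zero.mpr (sub_ne_zero.mpr h))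

theorem main (N : ℕ) (hN : 1 ≤ N) (η : ℂ) (hη : η ≠ 0)
    (ξ : Fin N → ℂ) (hG : GenG N η ξ)
    (hξhalf : ∀ n, ξ n ≠ η / 2 ∧ ξ n ≠ -(η / 2))
    (ζp ζm : ℂ) (hζp : ζp ≠ 0) (hζm : ζm ≠ 0)
    (p q : ℕ)
    (hpq : ζp + ζm + ((p : ℂ) - (q : ℂ)) * η ≠ 0)
    (lamR : Fin q → ℂ) (muR : Fin p → ℂ)
    (Q P : ℂ → ℂ)
    (hQdef : Q = fun lam => ∏ b, (lam ^ 2 - lamR b ^ 2))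
    (hPdef : P = fun lam => ∏ b, (lam ^ 2 - muR b ^ 2))
    (t : Polynomial ℂ) (hte : ∀ x : ℂ, t.eval (-x) = t.eval x)
    (hQeq : ∀ lam : ℂ, 2 * lam * ζp * ζm * t.eval lam * Q lam =
      Ahat N η ξ ζp ζm lam * Q (lam - η)
        - Ahat N η ξ ζp ζm (-lam) * Q (lam + η))
    (hPeq : ∀ lam : ℂ, 2 * lam * ζp * ζm * t.eval lam * P lam =
      Ahat N η ξ (-ζp) (-ζm) lam * P (lam - η)
        - Ahat N η ξ (-ζp) (-ζm) (-lam) * P (lam + η)) :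
    p + q = N ∧
    ∀ lam : ℂ,
      (lam - η / 2 + ζp) * (lam - η / 2 + ζm) * Q (lam - η) * P lam
        - (lam - η / 2 - ζp) * (lam - η / 2 - ζm) * Q lam * P (lam - η)
      = 2 * (-1 : ℂ) ^ N * (ζp + ζm + ((p : ℂ) - (q : ℂ)) * η)
          * (lam - η / 2) * aF N η ξ (-lam) * dF N η ξ lam := by
  obtain ⟨hG1, hG2⟩ := hG
  have hQ : ∀ x : ℂ, Q x = ∏ b, (x ^ 2 - lamR b ^ 2) := fun x => by rw [hQdef]
  have hP : ∀ x : ℂ, P x = ∏ b, (x ^ 2 - muR b ^ 2) := fun x => by rw [hPdef]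
  have hpow : (-1 : ℂ) ^ N * (-1 : ℂ) ^ N = 1 := by
    rw [← pow_add, ← two_mul, pow_mul]
    norm_num
  have had : ∀ μ : ℂ, aF N η ξ μ * dF N η ξ (-μ)
      = (-1 : ℂ) ^ N * ∏ n, ((μ + η / 2) ^ 2 - ξ n ^ 2) := by
    intro μ
    unfold aF dF
    rw [← Finset.prod_mul_distrib,
      show ((-1 : ℂ) ^ N) = ∏ _n : Fin N, (-1 : ℂ) from by simp, ← Finset.prod_mul_distrib]
    exact Finset.prod_congr rfl fun n _ => by ring
  have hAhat : ∀ a b μ : ℂ, Ahat N η ξ a b μ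
      = (2 * μ + η) * (μ - η / 2 + a) * (μ - η / 2 + b) * ∏ n, ((μ + η / 2) ^ 2 - ξ n ^ 2) := by
    intro a b μ
    unfold Ahat
    linear_combination ((-1 : ℂ) ^ N * (2 * μ + η) * (μ - η / 2 + a) * (μ - η / 2 + b)) * had μ
      + ((2 * μ + η) * (μ - η / 2 + a) * (μ - η / 2 + b)
          * ∏ n, ((μ + η / 2) ^ 2 - ξ n ^ 2)) * hpow
  have key : ∀ x : ℂ,
      (2 * x + η) * (∏ n, ((x + η / 2) ^ 2 - ξ n ^ 2)) *
        ((x - η / 2 + ζp) * (x - η / 2 + ζm) * Q (x - η) * P x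
          - (x - η / 2 - ζp) * (x - η / 2 - ζm) * Q x * P (x - η))
      = (2 * x - η) * (∏ n, ((x - η / 2) ^ 2 - ξ n ^ 2)) *
        ((x + η / 2 + ζp) * (x + η / 2 + ζm) * Q x * P (x + η)
          - (x + η / 2 - ζp) * (x + η / 2 - ζm) * Q (x + η) * P x) := by
    intro x
    have e1 := hQeq x
    have e2 := hPeq x
    rw [hAhat, hAhat,
      show (∏ n, ((-x + η / 2) ^ 2 - ξ n ^ 2)) = ∏ n, ((x - η / 2) ^ 2 - ξ n ^ 2) from
        Finset.prod_congr rfl fun n _ => by ring] at e1 e2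
    linear_combination (Q x) * e2 - (P x) * e1
  set A : Polynomial ℂ :=
    (X - C (η / 2 - ζp)) * (X - C (η / 2 - ζm)) * PR η lamR * PR 0 muR with hA
  set B : Polynomial ℂ :=
    (X - C (η / 2 + ζp)) * (X - C (η / 2 + ζm)) * PR 0 lamR * PR η muR with hB
  set W : Polynomial ℂ := A - B with hWdefn
  set Hm : Polynomial ℂ := PR (η / 2) ξ with hHmdefn
  set Hp : Polynomial ℂ := PR (-(η / 2)) ξ with hHpdefn
  set Z : Polynomial ℂ := (X - C (η / 2)) * Hm with hZdefn
  set U : Polynomial ℂ := (X - C (-(η / 2))) * Hp with hUdefn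
  have hAm : A.Monic := by
    rw [hA]
    exact (((monic_X_sub_C _).mul (monic_X_sub_C _)).mul (PR_monic _ _)).mul (PR_monic _ _)
  have hBm : B.Monic := by
    rw [hB]
    exact (((monic_X_sub_C _).mul (monic_X_sub_C _)).mul (PR_monic _ _)).mul (PR_monic _ _)
  have hAdeg : A.natDegree = 2 * p + 2 * q + 2 := by
    rw [hA,
      (((monic_X_sub_C _).mul (monic_X_sub_C _)).mul (PR_monic _ _)).natDegree_mul
        (PR_monic _ _),
      ((monic_X_sub_C _).mul (monic_X_sub_C _)).natDegree_mul (PR_monic _ _),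
      (monic_X_sub_C _).natDegree_mul (monic_X_sub_C _)]
    simp only [natDegree_X_sub_C, PR_natDegree]
    omega
  have hBdeg : B.natDegree = 2 * p + 2 * q + 2 := by
    rw [hB,
      (((monic_X_sub_C _).mul (monic_X_sub_C _)).mul (PR_monic _ _)).natDegree_mul
        (PR_monic _ _),
      ((monic_X_sub_C _).mul (monic_X_sub_C _)).natDegree_mul (PR_monic _ _),
      (monic_X_sub_C _).natDegree_mul (monic_X_sub_C _)]
    simp only [natDegree_X_sub_C, PR_natDegree]
    omega
  have hnA : A.nextCoeff = ζp + ζm - η - 2 * (q : ℂ) * η := by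
    rw [hA,
      (((monic_X_sub_C _).mul (monic_X_sub_C _)).mul (PR_monic _ _)).nextCoeff_mul
        (PR_monic _ _),
      ((monic_X_sub_C _).mul (monic_X_sub_C _)).nextCoeff_mul (PR_monic _ _),
      (monic_X_sub_C _).nextCoeff_mul (monic_X_sub_C _), nextCoeff_X_sub_C, nextCoeff_X_sub_C,
      PR_nextCoeff, PR_nextCoeff]
    ring
  have hnB : B.nextCoeff = -ζp - ζm - η - 2 * (p : ℂ) * η := by
    rw [hB,
      (((monic_X_sub_C _).mul (monic_X_sub_C _)).mul (PR_monic _ _)).nextCoeff_mul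
        (PR_monic _ _),
      ((monic_X_sub_C _).mul (monic_X_sub_C _)).nextCoeff_mul (PR_monic _ _),
      (monic_X_sub_C _).nextCoeff_mul (monic_X_sub_C _), nextCoeff_X_sub_C, nextCoeff_X_sub_C,
      PR_nextCoeff, PR_nextCoeff]
    ring
  have hnextW : W.coeff (2 * p + 2 * q + 1) = 2 * (ζp + ζm + ((p : ℂ) - (q : ℂ)) * η) := by
    have h1 : A.coeff (2 * p + 2 * q + 1) = A.nextCoeff := by
      rw [nextCoeff_of_natDegree_pos (by rw [hAdeg]; omega), hAdeg]
      congr 1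
    have h2 : B.coeff (2 * p + 2 * q + 1) = B.nextCoeff := by
      rw [nextCoeff_of_natDegree_pos (by rw [hBdeg]; omega), hBdeg]
      congr 1
    rw [hWdefn, coeff_sub, h1, h2, hnA, hnB]
    ring
  have hlcne : (2 : ℂ) * (ζp + ζm + ((p : ℂ) - (q : ℂ)) * η) ≠ 0 := mul_ne_zero two_ne_zero hpq
  have hWne : W ≠ 0 := by
    intro h
    rw [h, coeff_zero] at hnextW
    exact hlcne hnextW.symm
  have hWdeg : W.natDegree = 2 * p + 2 * q + 1 := by
    have hlt : W.natDegree < 2 * p + 2 * q + 2 := by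
      rw [natDegree_lt_iff_degree_lt hWne]
      have hd : W.degree < A.degree := by
        rw [hWdefn]
        exact degree_sub_lt
          (by rw [degree_eq_natDegree hAm.ne_zero, degree_eq_natDegree hBm.ne_zero, hAdeg, hBdeg])
          hAm.ne_zero (by rw [hAm.leadingCoeff, hBm.leadingCoeff])
      calc W.degree < A.degree := hd
        _ = ((2 * p + 2 * q + 2 : ℕ) : WithBot ℕ) := by
            rw [degree_eq_natDegree hAm.ne_zero, hAdeg]
    have hge : 2 * p + 2 * q + 1 ≤ W.natDegree :=
      le_natDegree_of_ne_zero (by rw [hnextW]; exact hlcne)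
    omega
  have evalW : ∀ x : ℂ, W.eval x
      = (x - η / 2 + ζp) * (x - η / 2 + ζm) * Q (x - η) * P x
        - (x - η / 2 - ζp) * (x - η / 2 - ζm) * Q x * P (x - η) := by
    intro x
    rw [hWdefn, hA, hB]
    simp only [hQ, hP, eval_sub, eval_mul, eval_X, eval_C, PR_eval, sub_zero]
    ring
  have polyId : U * W = Z * (W.comp (X + C η)) := by
    apply Polynomial.funext
    intro x
    have hk := key x
    rw [hUdefn, hZdefn, hHmdefn, hHpdefn]
    simp only [eval_mul, eval_sub, eval_add, eval_X, eval_C, eval_comp, PR_eval, evalW,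
      add_sub_cancel_right]
    rw [show (∏ n, ((x - -(η / 2)) ^ 2 - ξ n ^ 2)) = ∏ n, ((x + η / 2) ^ 2 - ξ n ^ 2) from
      Finset.prod_congr rfl fun n _ => by ring]
    linear_combination (1 / 2 : ℂ) * hk
  have copZU : IsCoprime Z U := by
    rw [hZdefn, hUdefn, hHmdefn, hHpdefn]
    have hXX : IsCoprime (X - C (η / 2) : ℂ[X]) (X - C (-(η / 2))) :=
      lin_coprime fun h => hη (by linear_combination h)
    have hXHp : IsCoprime (X - C (η / 2) : ℂ[X]) (PR (-(η / 2)) ξ) := by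
      unfold PR
      refine IsCoprime.prod_right fun k _ => ?_
      refine (lin_coprime ?_).mul_right (lin_coprime ?_)
      · exact fun h => (hG1 k).2.1 (by linear_combination -h)
      · exact fun h => (hG1 k).2.2 (by linear_combination h)
    have hHmX : IsCoprime (PR (η / 2) ξ) (X - C (-(η / 2)) : ℂ[X]) := by
      unfold PR
      refine IsCoprime.prod_left fun j _ => ?_
      refine (lin_coprime ?_).mul_left (lin_coprime ?_)
      · exact fun h => (hG1 j).2.2 (by linear_combination h)
      · exact fun h => (hG1 j).2.1 (by linear_combination -h)
    have hHmHp : IsCoprime (PR (η / 2) ξ) (PR (-(η / 2)) ξ) := by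
      unfold PR
      refine IsCoprime.prod_left fun j _ => ?_
      refine IsCoprime.prod_right fun k _ => ?_
      by_cases hjk : j = k
      · subst hjk
        refine IsCoprime.mul_left ((lin_coprime ?_).mul_right (lin_coprime ?_))
          ((lin_coprime ?_).mul_right (lin_coprime ?_))
        · exact fun h => hη (by linear_combination h)
        · exact fun h => (hξhalf j).2 (by linear_combination (1 / 2 : ℂ) * h)
        · exact fun h => (hξhalf j).1 (by linear_combination (-(1 / 2) : ℂ) * h)
        · exact fun h => hη (by linear_combination h)
      · obtain ⟨g1, g2, g3, g4, g5, g6⟩ := hG2 j k hjk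
        refine IsCoprime.mul_left ((lin_coprime ?_).mul_right (lin_coprime ?_))
          ((lin_coprime ?_).mul_right (lin_coprime ?_))
        · exact fun h => g6 (by linear_combination h)
        · exact fun h => g3 (by linear_combination h)
        · exact fun h => g2 (by linear_combination -h)
        · exact fun h => g5 (by linear_combination -h)
    exact IsCoprime.mul_left (hXX.mul_right hXHp) (hHmX.mul_right hHmHp)
  have hzdvd : Z ∣ W := copZU.dvd_of_dvd_mul_left ⟨W.comp (X + C η), polyId⟩
  obtain ⟨V, hV⟩ := hzdvd
  have hZcomp : Z.comp (X + C η) = U := by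
    rw [hZdefn, hUdefn, hHmdefn, hHpdefn, mul_comp, sub_comp, X_comp, C_comp, PR_comp,
      show η / 2 - η = -(η / 2) from by ring,
      show (C (-(η / 2)) : ℂ[X]) = C (η / 2) - C η from by rw [← map_sub]; congr 1; ring]
    ring
  have hUm : U.Monic := by
    rw [hUdefn, hHpdefn]; exact (monic_X_sub_C _).mul (PR_monic _ _)
  have hZm : Z.Monic := by
    rw [hZdefn, hHmdefn]; exact (monic_X_sub_C _).mul (PR_monic _ _)
  have hVper : V = V.comp (X + C η) := by
    apply mul_left_cancel₀ (mul_ne_zero hUm.ne_zero hZm.ne_zero)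
    have h2 := polyId
    rw [hV, mul_comp, hZcomp] at h2
    linear_combination h2
  have hVeval : ∀ x : ℂ, V.eval (x + η) = V.eval x := by
    intro x
    conv_rhs => rw [hVper]
    simp [eval_comp]
  have hVnat : ∀ k : ℕ, V.eval ((k : ℂ) * η) = V.eval 0 := by
    intro k
    induction k with
    | zero => norm_num
    | succ n ih =>
      rw [show (((n + 1 : ℕ) : ℂ)) * η = (n : ℂ) * η + η from by push_cast; ring, hVeval, ih]
  have hVconst : V = C (V.eval 0) := by
    have h0 : V - C (V.eval 0) = 0 := by
      apply Polynomial.eq_zero_of_infinite_isRoot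
      apply Set.infinite_of_injective_forall_mem (f := fun k : ℕ => (k : ℂ) * η)
      · intro a b hab
        have : ((a : ℂ)) = (b : ℂ) := mul_right_cancel₀ hη hab
        exact_mod_cast this
      · intro k
        simp only [Set.mem_setOf_eq, IsRoot.def, eval_sub, eval_C, hVnat k, sub_self]
    exact sub_eq_zero.mp h0
  rw [hVconst] at hV
  have hvne : V.eval 0 ≠ 0 := by
    intro h
    rw [h, map_zero, mul_zero] at hV
    exact hWne hV
  have hWdeg2 : W.natDegree = 2 * N + 1 := by
    rw [hV, natDegree_mul hZm.ne_zero (C_ne_zero.mpr hvne), natDegree_C,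
      hZdefn, hHmdefn, (monic_X_sub_C _).natDegree_mul (PR_monic _ _), natDegree_X_sub_C,
      PR_natDegree]
    omega
  have hpqN : p + q = N := by omega
  refine ⟨hpqN, ?_⟩
  have hvval : V.eval 0 = 2 * (ζp + ζm + ((p : ℂ) - (q : ℂ)) * η) := by
    have h1 : W.leadingCoeff = V.eval 0 := by
      rw [hV, leadingCoeff_mul, hZm.leadingCoeff, leadingCoeff_C, one_mul]
    rw [← h1, leadingCoeff, hWdeg, hnextW]
  intro lam
  have hfin : aF N η ξ (-lam) * dF N η ξ lam
      = (-1 : ℂ) ^ N * ∏ n, ((lam - η / 2) ^ 2 - ξ n ^ 2) := by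
    unfold aF dF
    rw [← Finset.prod_mul_distrib,
      show ((-1 : ℂ) ^ N) = ∏ _n : Fin N, (-1 : ℂ) from by simp, ← Finset.prod_mul_distrib]
    exact Finset.prod_congr rfl fun n _ => by ring
  have hWeval : W.eval lam
      = (lam - η / 2) * (∏ n, ((lam - η / 2) ^ 2 - ξ n ^ 2)) * V.eval 0 := by
    rw [hV, eval_mul, eval_C, hZdefn, hHmdefn, eval_mul, eval_sub, eval_X, eval_C, PR_eval]
  rw [← evalW lam, hWeval, hvval]
  linear_combination
    (-(2 * (ζp + ζm + ((p : ℂ) - (q : ℂ)) * η) * (lam - η / 2)) * (-1 : ℂ) ^ N) * hfin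
    + (-(2 * (ζp + ζm + ((p : ℂ) - (q : ℂ)) * η) * (lam - η / 2)
        * ∏ n, ((lam - η / 2) ^ 2 - ξ n ^ 2))) * hpow

end Stmt0Aux

theorem stmt0 (N : ℕ) (hN : 1 ≤ N) (η : ℂ) (hη : η ≠ 0)
    (ξ : Fin N → ℂ) (hG : GenG N η ξ)
    (hξhalf : ∀ n, ξ n ≠ η / 2 ∧ ξ n ≠ -(η / 2))
    (ζp ζm : ℂ) (hζp : ζp ≠ 0) (hζm : ζm ≠ 0)
    (p q : ℕ)
    (hpq : ζp + ζm + ((p : ℂ) - (q : ℂ)) * η ≠ 0)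
    (lamR : Fin q → ℂ) (muR : Fin p → ℂ)
    (Q P : ℂ → ℂ)
    (hQdef : Q = fun lam => ∏ b, (lam ^ 2 - lamR b ^ 2))
    (hPdef : P = fun lam => ∏ b, (lam ^ 2 - muR b ^ 2))
    (t : Polynomial ℂ) (hte : ∀ x : ℂ, t.eval (-x) = t.eval x)
    (hQeq : ∀ lam : ℂ, 2 * lam * ζp * ζm * t.eval lam * Q lam =
      Ahat N η ξ ζp ζm lam * Q (lam - η)
        - Ahat N η ξ ζp ζm (-lam) * Q (lam + η))
    (hPeq : ∀ lam : ℂ, 2 * lam * ζp * ζm * t.eval lam * P lam =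
      Ahat N η ξ (-ζp) (-ζm) lam * P (lam - η)
        - Ahat N η ξ (-ζp) (-ζm) (-lam) * P (lam + η)) :
    p + q = N ∧
    ∀ lam : ℂ,
      (lam - η / 2 + ζp) * (lam - η / 2 + ζm) * Q (lam - η) * P lam
        - (lam - η / 2 - ζp) * (lam - η / 2 - ζm) * Q lam * P (lam - η)
      = 2 * (-1 : ℂ) ^ N * (ζp + ζm + ((p : ℂ) - (q : ℂ)) * η)
          * (lam - η / 2) * aF N η ξ (-lam) * dF N η ξ lam := by
  exact Stmt0Aux.main N hN η hη ξ hG hξhalf ζp ζm hζp hζm p q hpq lamR muR Q P hQdef hPdef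
    t hte hQeq hPeq
end

section
/- Let N ≥ 1 be an integer, η ∈ ℂ, ξ_1,…,ξ_N ∈ ℂ, ζ₊, ζ₋ ∈ ℂ∖{0}, let Q and P be even polynomials, and let t : ℂ → ℂ be an even polynomial such that for all λ ∈ ℂ: 2λ ζ₊ζ₋ t(λ) Q(λ) = Â_{ζ₊,ζ₋}(λ) Q(λ−η) − Â_{ζ₊,ζ₋}(−λ) Q(λ+η), and 2λ ζ₊ζ₋ t(λ) P(λ) = Â_{−ζ₊,−ζ₋}(λ) P(λ−η) − Â_{−ζ₊,−ζ₋}(−λ) P(λ+η). Then, with A(λ) := (−1)^N (λ+η/2) a(λ) d(−λ), one has A(λ) W_{Q,P}(λ) = A(−λ) W_{Q,P}(−λ) for all λ ∈ ℂ. -/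
open Finset

/-- `A(λ) = (−1)^N (λ+η/2) a(λ) d(−λ)`. -/
noncomputable def Asimple (N : ℕ) (η : ℂ) (ξ : Fin N → ℂ) (lam : ℂ) : ℂ :=
  (-1 : ℂ) ^ N * (lam + η / 2) * aF N η ξ lam * dF N η ξ (-lam)

/-- Wronskian `W_{Q,P}(λ)`. -/
noncomputable def Wronsk (η ζp ζm : ℂ) (Q P : Polynomial ℂ) (lam : ℂ) : ℂ :=
  (lam - η / 2 + ζp) * (lam - η / 2 + ζm) * Q.eval (lam - η) * P.eval lam
    - (lam - η / 2 - ζp) * (lam - η / 2 - ζm) * Q.eval lam * P.eval (lam - η)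

theorem stmt1 (N : ℕ) (hN : 1 ≤ N) (η : ℂ) (ξ : Fin N → ℂ)
    (ζp ζm : ℂ) (hζp : ζp ≠ 0) (hζm : ζm ≠ 0)
    (Q P t : Polynomial ℂ)
    (hQe : ∀ x : ℂ, Q.eval (-x) = Q.eval x)
    (hPe : ∀ x : ℂ, P.eval (-x) = P.eval x)
    (hte : ∀ x : ℂ, t.eval (-x) = t.eval x)
    (hQeq : ∀ lam : ℂ, 2 * lam * ζp * ζm * t.eval lam * Q.eval lam =
      Ahat N η ξ ζp ζm lam * Q.eval (lam - η)
        - Ahat N η ξ ζp ζm (-lam) * Q.eval (lam + η))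
    (hPeq : ∀ lam : ℂ, 2 * lam * ζp * ζm * t.eval lam * P.eval lam =
      Ahat N η ξ (-ζp) (-ζm) lam * P.eval (lam - η)
        - Ahat N η ξ (-ζp) (-ζm) (-lam) * P.eval (lam + η)) :
    ∀ lam : ℂ,
      Asimple N η ξ lam * Wronsk η ζp ζm Q P lam
        = Asimple N η ξ (-lam) * Wronsk η ζp ζm Q P (-lam) := by
  intro lam
  have h1 := hQeq lam
  have h2 := hPeq lam
  have eQ : Q.eval (-lam - η) = Q.eval (lam + η) := by
    rw [show -lam - η = -(lam + η) by ring, hQe]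
  have eP : P.eval (-lam - η) = P.eval (lam + η) := by
    rw [show -lam - η = -(lam + η) by ring, hPe]
  simp only [Ahat, Asimple, Wronsk, neg_neg] at *
  rw [eQ, eP, hQe lam, hPe lam]
  linear_combination (-(P.eval lam) / 2) * h1 + (Q.eval lam) / 2 * h2
end

section
/- Let N ≥ 1 be an integer, η ∈ ℂ∖{0}, ξ_1,…,ξ_N ∈ ℂ, ζ₊, ζ₋ ∈ ℂ∖{0}, c ∈ ℂ, and set F(λ) := c (λ² − η²/4) ∏_{b=1}^N ∏_{h=0}^1 (λ² − (ξ_b^{(h)})²). Let Q and t be even polynomials such that for all λ ∈ ℂ: 2λ ζ₊ζ₋ t(λ) Q(λ) = Â_{ζ₊,ζ₋}(λ) Q(λ−η) − Â_{ζ₊,ζ₋}(−λ) Q(λ+η) + 2λ ζ₊ζ₋ F(λ). Then for every n ∈ {1,…,N}: (i) 2 ξ_n^{(0)} ζ₊ζ₋ t(ξ_n^{(0)}) Q(ξ_n^{(0)}) = Â_{ζ₊,ζ₋}(ξ_n^{(0)}) Q(ξ_n^{(1)}); (ii) 2 ξ_n^{(1)} ζ₊ζ₋ t(ξ_n^{(1)})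 Q(ξ_n^{(1)}) = −Â_{ζ₊,ζ₋}(−ξ_n^{(1)}) Q(ξ_n^{(0)}); and (iii) if moreover Q(ξ_n^{(0)}) Q(ξ_n^{(1)}) ≠ 0 then 4 ξ_n^{(0)} ξ_n^{(1)} (ζ₊ζ₋)² t(ξ_n^{(0)}) t(ξ_n^{(1)}) = −Â_{ζ₊,ζ₋}(ξ_n^{(0)}) Â_{ζ₊,ζ₋}(−ξ_n^{(1)}). -/
open Finset

/-- Inhomogeneous term `F(λ) = c (λ²−η²/4) ∏_{b,h} (λ² − (ξ_b^{(h)})²)`. -/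
noncomputable def Fterm (N : ℕ) (η : ℂ) (ξ : Fin N → ℂ) (c lam : ℂ) : ℂ :=
  c * (lam ^ 2 - η ^ 2 / 4) *
    ∏ b, ((lam ^ 2 - (ξ b + η / 2) ^ 2) * (lam ^ 2 - (ξ b - η / 2) ^ 2))

theorem stmt2 (N : ℕ) (hN : 1 ≤ N) (η : ℂ) (hη : η ≠ 0)
    (ξ : Fin N → ℂ) (ζp ζm : ℂ) (hζp : ζp ≠ 0) (hζm : ζm ≠ 0) (c : ℂ)
    (Q t : Polynomial ℂ)
    (hQe : ∀ x : ℂ, Q.eval (-x) = Q.eval x)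
    (hte : ∀ x : ℂ, t.eval (-x) = t.eval x)
    (hQeq : ∀ lam : ℂ, 2 * lam * ζp * ζm * t.eval lam * Q.eval lam =
      Ahat N η ξ ζp ζm lam * Q.eval (lam - η)
        - Ahat N η ξ ζp ζm (-lam) * Q.eval (lam + η)
        + 2 * lam * ζp * ζm * Fterm N η ξ c lam) :
    ∀ n : Fin N,
      (2 * (ξ n + η / 2) * ζp * ζm * t.eval (ξ n + η / 2) * Q.eval (ξ n + η / 2)
          = Ahat N η ξ ζp ζm (ξ n + η / 2) * Q.eval (ξ n - η / 2)) ∧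
      (2 * (ξ n - η / 2) * ζp * ζm * t.eval (ξ n - η / 2) * Q.eval (ξ n - η / 2)
          = -(Ahat N η ξ ζp ζm (-(ξ n - η / 2)) * Q.eval (ξ n + η / 2))) ∧
      (Q.eval (ξ n + η / 2) * Q.eval (ξ n - η / 2) ≠ 0 →
        4 * (ξ n + η / 2) * (ξ n - η / 2) * (ζp * ζm) ^ 2
            * t.eval (ξ n + η / 2) * t.eval (ξ n - η / 2)
          = -(Ahat N η ξ ζp ζm (ξ n + η / 2) * Ahat N η ξ ζp ζm (-(ξ n - η / 2)))) := by

  intro n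
  have hF0 : Fterm N η ξ c (ξ n + η / 2) = 0 := by
    unfold Fterm
    rw [Finset.prod_eq_zero (Finset.mem_univ n) (by ring)]
    ring
  have hF1 : Fterm N η ξ c (ξ n - η / 2) = 0 := by
    unfold Fterm
    rw [Finset.prod_eq_zero (Finset.mem_univ n) (by ring)]
    ring
  have hA0 : Ahat N η ξ ζp ζm (-(ξ n + η / 2)) = 0 := by
    unfold Ahat dF
    rw [Finset.prod_eq_zero (Finset.mem_univ n) (by ring)]
    ring
  have hA1 : Ahat N η ξ ζp ζm (ξ n - η / 2) = 0 := by
    unfold Ahat aF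
    rw [Finset.prod_eq_zero (Finset.mem_univ n) (by ring)]
    ring
  have h1 := hQeq (ξ n + η / 2)
  rw [show ξ n + η / 2 - η = ξ n - η / 2 by ring, hA0, hF0] at h1
  have h1' : 2 * (ξ n + η / 2) * ζp * ζm * t.eval (ξ n + η / 2) * Q.eval (ξ n + η / 2)
      = Ahat N η ξ ζp ζm (ξ n + η / 2) * Q.eval (ξ n - η / 2) := by
    linear_combination h1
  have h2 := hQeq (ξ n - η / 2)
  rw [show ξ n - η / 2 + η = ξ n + η / 2 by ring, hA1, hF1] at h2
  have h2' : 2 * (ξ n - η / 2) * ζp * ζm * t.eval (ξ n - η / 2) * Q.eval (ξ n - η / 2)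
      = -(Ahat N η ξ ζp ζm (-(ξ n - η / 2)) * Q.eval (ξ n + η / 2)) := by
    linear_combination h2
  refine ⟨h1', h2', fun hne => ?_⟩
  have key : (4 * (ξ n + η / 2) * (ξ n - η / 2) * (ζp * ζm) ^ 2
        * t.eval (ξ n + η / 2) * t.eval (ξ n - η / 2)
        + Ahat N η ξ ζp ζm (ξ n + η / 2) * Ahat N η ξ ζp ζm (-(ξ n - η / 2)))
      * (Q.eval (ξ n + η / 2) * Q.eval (ξ n - η / 2)) = 0 := by
    linear_combination (2 * (ξ n - η / 2) * ζp * ζm * t.eval (ξ n - η / 2)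
        * Q.eval (ξ n - η / 2)) * h1'
      + (Ahat N η ξ ζp ζm (ξ n + η / 2) * Q.eval (ξ n - η / 2)) * h2'
  rcases mul_eq_zero.mp key with h | h
  · linear_combination h
  · exact absurd h hne
end

section
/- Let N ≥ 1 be an integer, η ∈ ℂ∖{0}, and suppose ξ_1,…,ξ_N ∈ ℂ satisfy the genericity condition (G). Then for arbitrary complex numbers c_1^{(0)},…,c_N^{(0)}, c_1^{(1)},…,c_N^{(1)} and g_1,…,g_N one has V̂(ξ_1^{(1)},…,ξ_N^{(1)}) · det_{1≤i,j≤N}[ c_i^{(0)} (ξ_i^{(0)})^{2(j−1)} + f_i g_i c_i^{(1)} (ξ_i^{(1)})^{2(j−1)} ] = V̂(ξ_1^{(0)},…,ξ_N^{(0)}) · det_{1≤i,j≤N}[ c_i^{(0)} (ξ_i^{(1)})^{2(j−1)} − g_i c_i^{(1)} (ξ_i^{(0)})^{2(j−1)} ]. -/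
open Finset

/-- `V̂(u_1,…,u_L) = ∏_{j<k}(u_k² − u_j²)`. -/
noncomputable def Vhat {L : ℕ} (u : Fin L → ℂ) : ℂ :=
  ∏ j, ∏ k ∈ Finset.Ioi j, (u k ^ 2 - u j ^ 2)

/-- `f_n = −∏_{a≠n} ((ξ_n−ξ_a+η)(ξ_n+ξ_a+η))/((ξ_n−ξ_a−η)(ξ_n+ξ_a−η))`. -/
noncomputable def fC (N : ℕ) (η : ℂ) (ξ : Fin N → ℂ) (n : Fin N) : ℂ :=
  -∏ a ∈ Finset.univ.erase n,
      ((ξ n - ξ a + η) * (ξ n + ξ a + η)) / ((ξ n - ξ a - η) * (ξ n + ξ a - η))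



lemma erase_univ_eq {N : ℕ} (i : Fin N) :
    Finset.univ.erase i = Finset.Iio i ∪ Finset.Ioi i := by
  ext a
  simp only [Finset.mem_erase, Finset.mem_univ, and_true, Finset.mem_union, Finset.mem_Iio,
    Finset.mem_Ioi, ← Fin.val_ne_iff, Fin.lt_def]
  omega

lemma prod_erase_split {N : ℕ} (i : Fin N) (h : Fin N → ℂ) :
    ∏ a ∈ Finset.univ.erase i, h a
      = (∏ a ∈ Finset.Iio i, h a) * ∏ a ∈ Finset.Ioi i, h a := by
  rw [erase_univ_eq, Finset.prod_union]
  intro t h1 h2 a ha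
  have := h1 ha; have := h2 ha
  simp_all
  omega

lemma vhat_update_formula {N : ℕ} (z : Fin N → ℂ) (i : Fin N) (v : ℂ) :
    Vhat (Function.update z i v)
      = (∏ k ∈ Finset.Ioi i, (z k ^ 2 - v ^ 2))
        * (∏ j ∈ Finset.Iio i, (v ^ 2 - z j ^ 2))
        * ∏ j ∈ Finset.univ.erase i, ∏ k ∈ (Finset.Ioi j).erase i, (z k ^ 2 - z j ^ 2) := by
  set u := Function.update z i v with hu
  have hui : u i = v := Function.update_self i v z
  have hun : ∀ a, a ≠ i → u a = z a := fun a ha => Function.update_of_ne ha v z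
  unfold Vhat
  rw [← Finset.mul_prod_erase Finset.univ _ (Finset.mem_univ i)]
  have h1 : ∏ k ∈ Finset.Ioi i, (u k ^ 2 - u i ^ 2) = ∏ k ∈ Finset.Ioi i, (z k ^ 2 - v ^ 2) := by
    refine Finset.prod_congr rfl fun k hk => ?_
    rw [hun k (ne_of_gt (Finset.mem_Ioi.mp hk)), hui]
  have h2 : ∀ j ∈ Finset.univ.erase i,
      ∏ k ∈ Finset.Ioi j, (u k ^ 2 - u j ^ 2)
        = (if j < i then (v ^ 2 - z j ^ 2) else 1)
          * ∏ k ∈ (Finset.Ioi j).erase i, (z k ^ 2 - z j ^ 2) := by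
    intro j hj
    have hji : j ≠ i := (Finset.mem_erase.mp hj).1
    have huj : u j = z j := hun j hji
    have hinner : ∏ k ∈ (Finset.Ioi j).erase i, (u k ^ 2 - u j ^ 2)
        = ∏ k ∈ (Finset.Ioi j).erase i, (z k ^ 2 - z j ^ 2) := by
      refine Finset.prod_congr rfl fun k hk => ?_
      rw [hun k (Finset.mem_erase.mp hk).1, huj]
    by_cases hlt : j < i
    · rw [← Finset.mul_prod_erase (Finset.Ioi j) _ (Finset.mem_Ioi.mpr hlt), if_pos hlt,
        hinner, hui, huj]
    · have : i ∉ Finset.Ioi j := by simp [hlt]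
      rw [Finset.erase_eq_of_notMem this] at hinner
      rw [if_neg hlt, one_mul, Finset.erase_eq_of_notMem this]
      exact hinner
  rw [h1, Finset.prod_congr rfl h2, Finset.prod_mul_distrib]
  have h3 : ∏ j ∈ Finset.univ.erase i, (if j < i then (v ^ 2 - z j ^ 2) else 1)
      = ∏ j ∈ Finset.Iio i, (v ^ 2 - z j ^ 2) := by
    rw [← Finset.prod_filter]
    congr 1
    ext a
    simp [Finset.mem_erase, and_comm]
    intro h; exact ne_of_lt h
  rw [h3]; ring

lemma vhat_update {N : ℕ} (z : Fin N → ℂ) (i : Fin N) (v : ℂ) :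
    Vhat (Function.update z i v) * ∏ a ∈ Finset.univ.erase i, (z i ^ 2 - z a ^ 2)
      = Vhat z * ∏ a ∈ Finset.univ.erase i, (v ^ 2 - z a ^ 2) := by
  have hz : Vhat z = Vhat (Function.update z i (z i)) := by rw [Function.update_eq_self]
  rw [hz, vhat_update_formula, vhat_update_formula]
  simp only [prod_erase_split]
  have key : (∏ k ∈ Finset.Ioi i, (z k ^ 2 - v ^ 2)) * ∏ a ∈ Finset.Ioi i, (z i ^ 2 - z a ^ 2)
      = (∏ k ∈ Finset.Ioi i, (z k ^ 2 - z i ^ 2)) * ∏ a ∈ Finset.Ioi i, (v ^ 2 - z a ^ 2) := by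
    rw [← Finset.prod_mul_distrib, ← Finset.prod_mul_distrib]
    exact Finset.prod_congr rfl fun k _ => by ring
  linear_combination ((∏ j ∈ Finset.Iio i, (v ^ 2 - z j ^ 2)) *
    (∏ j ∈ Finset.Iio i, (z i ^ 2 - z j ^ 2)) *
    (∏ j ∈ Finset.Iio i, ∏ k ∈ (Finset.Ioi j).erase i, (z k ^ 2 - z j ^ 2)) *
    (∏ j ∈ Finset.Ioi i, ∏ k ∈ (Finset.Ioi j).erase i, (z k ^ 2 - z j ^ 2))) * key

section gen
variable {N : ℕ} {η : ℂ} {ξ : Fin N → ℂ} (hG : GenG N η ξ)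
include hG

lemma sq_diff_ne {j k : Fin N} (h : k ≠ j) {p q : ℂ}
    (hp : p = ξ k + η / 2 ∨ p = ξ k - η / 2)
    (hq : q = ξ j + η / 2 ∨ q = ξ j - η / 2) : p ^ 2 - q ^ 2 ≠ 0 := by
  obtain ⟨h1, h2, h3, h4, h5, h6⟩ := hG.2 k j h
  rcases hp with hp | hp <;> rcases hq with hq | hq <;> subst hp <;> subst hq
  · have e : (ξ k + η / 2) ^ 2 - (ξ j + η / 2) ^ 2 = (ξ k - ξ j) * (ξ k + ξ j + η) := by ring
    exact e ▸ mul_ne_zero h4 (fun h0 => h3 (by linear_combination h0))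
  · have e : (ξ k + η / 2) ^ 2 - (ξ j - η / 2) ^ 2 = (ξ k - ξ j + η) * (ξ k + ξ j) := by ring
    exact e ▸ mul_ne_zero (fun h0 => h6 (by linear_combination h0)) h1
  · have e : (ξ k - η / 2) ^ 2 - (ξ j + η / 2) ^ 2 = (ξ k - ξ j - η) * (ξ k + ξ j) := by ring
    exact e ▸ mul_ne_zero (fun h0 => h5 (by linear_combination h0)) h1
  · have e : (ξ k - η / 2) ^ 2 - (ξ j - η / 2) ^ 2 = (ξ k - ξ j) * (ξ k + ξ j - η) := by ring
    exact e ▸ mul_ne_zero h4 (fun h0 => h2 (by linear_combination h0))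

lemma vhat_pattern_ne_zero {z : Fin N → ℂ}
    (hz : ∀ a, z a = ξ a + η / 2 ∨ z a = ξ a - η / 2) : Vhat z ≠ 0 := by
  unfold Vhat
  refine Finset.prod_ne_zero_iff.mpr fun j _ => Finset.prod_ne_zero_iff.mpr fun k hk => ?_
  exact sq_diff_ne hG (ne_of_gt (Finset.mem_Ioi.mp hk)) (hz k) (hz j)

lemma coreC (i : Fin N) :
    fC N η ξ i * ∏ a ∈ Finset.univ.erase i,
        (((ξ i - η / 2) ^ 2 - (ξ a + η / 2) ^ 2) * ((ξ i - η / 2) ^ 2 - (ξ a - η / 2) ^ 2))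
    = -∏ a ∈ Finset.univ.erase i,
        (((ξ i + η / 2) ^ 2 - (ξ a + η / 2) ^ 2) * ((ξ i + η / 2) ^ 2 - (ξ a - η / 2) ^ 2)) := by
  unfold fC
  rw [neg_mul, ← Finset.prod_mul_distrib, neg_inj]
  refine Finset.prod_congr rfl fun a ha => ?_
  have hia : i ≠ a := fun h => (Finset.mem_erase.mp ha).1 h.symm
  obtain ⟨-, -, -, -, h5, h6⟩ := hG.2 i a hia
  have hd1 : ξ i - ξ a - η ≠ 0 := fun h0 => h5 (by linear_combination h0)
  have hd2 : ξ i + ξ a - η ≠ 0 := fun h0 =>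
    (hG.2 i a hia).2.1 (by linear_combination h0)
  field_simp
  ring

lemma step_flip {z w : Fin N → ℂ}
    (hzw : ∀ a, (z a = ξ a + η / 2 ∧ w a = ξ a - η / 2) ∨
                (z a = ξ a - η / 2 ∧ w a = ξ a + η / 2))
    {i : Fin N} (hzi : z i = ξ i + η / 2) (hwi : w i = ξ i - η / 2) :
    fC N η ξ i * Vhat (Function.update z i (ξ i - η / 2)) * Vhat w
      = -(Vhat z * Vhat (Function.update w i (ξ i + η / 2))) := by
  have hD1 : ∀ a ∈ Finset.univ.erase i, (ξ i + η / 2) ^ 2 - z a ^ 2 ≠ 0 := by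
    intro a ha
    refine sq_diff_ne hG (fun h => (Finset.mem_erase.mp ha).1 h.symm) (Or.inl rfl) ?_
    rcases hzw a with ⟨h, -⟩ | ⟨h, -⟩
    · exact Or.inl h
    · exact Or.inr h
  have hD2 : ∀ a ∈ Finset.univ.erase i, (ξ i + η / 2) ^ 2 - w a ^ 2 ≠ 0 := by
    intro a ha
    refine sq_diff_ne hG (fun h => (Finset.mem_erase.mp ha).1 h.symm) (Or.inl rfl) ?_
    rcases hzw a with ⟨-, h⟩ | ⟨-, h⟩
    · exact Or.inr h
    · exact Or.inl h
  have hDz : (∏ a ∈ Finset.univ.erase i, ((ξ i + η / 2) ^ 2 - z a ^ 2)) ≠ 0 :=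
    Finset.prod_ne_zero_iff.mpr hD1
  have hDw : (∏ a ∈ Finset.univ.erase i, ((ξ i + η / 2) ^ 2 - w a ^ 2)) ≠ 0 :=
    Finset.prod_ne_zero_iff.mpr hD2
  apply mul_right_cancel₀ (mul_ne_zero hDz hDw)
  have e1 := vhat_update z i (ξ i - η / 2)
  rw [hzi] at e1
  have e2 := vhat_update w i (ξ i + η / 2)
  rw [hwi] at e2
  have e3 : (∏ a ∈ Finset.univ.erase i, ((ξ i - η / 2) ^ 2 - z a ^ 2))
      * ∏ a ∈ Finset.univ.erase i, ((ξ i - η / 2) ^ 2 - w a ^ 2)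
      = ∏ a ∈ Finset.univ.erase i,
          (((ξ i - η / 2) ^ 2 - (ξ a + η / 2) ^ 2) * ((ξ i - η / 2) ^ 2 - (ξ a - η / 2) ^ 2)) := by
    rw [← Finset.prod_mul_distrib]
    refine Finset.prod_congr rfl fun a _ => ?_
    rcases hzw a with ⟨h1, h2⟩ | ⟨h1, h2⟩ <;> rw [h1, h2]
    ring
  have e4 : (∏ a ∈ Finset.univ.erase i, ((ξ i + η / 2) ^ 2 - z a ^ 2))
      * ∏ a ∈ Finset.univ.erase i, ((ξ i + η / 2) ^ 2 - w a ^ 2)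
      = ∏ a ∈ Finset.univ.erase i,
          (((ξ i + η / 2) ^ 2 - (ξ a + η / 2) ^ 2) * ((ξ i + η / 2) ^ 2 - (ξ a - η / 2) ^ 2)) := by
    rw [← Finset.prod_mul_distrib]
    refine Finset.prod_congr rfl fun a _ => ?_
    rcases hzw a with ⟨h1, h2⟩ | ⟨h1, h2⟩ <;> rw [h1, h2]
    ring
  have e5 := coreC hG i
  calc fC N η ξ i * Vhat (Function.update z i (ξ i - η / 2)) * Vhat w *
        ((∏ a ∈ Finset.univ.erase i, ((ξ i + η / 2) ^ 2 - z a ^ 2)) *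
          ∏ a ∈ Finset.univ.erase i, ((ξ i + η / 2) ^ 2 - w a ^ 2))
      = fC N η ξ i *
          (Vhat (Function.update z i (ξ i - η / 2)) *
            ∏ a ∈ Finset.univ.erase i, ((ξ i + η / 2) ^ 2 - z a ^ 2)) *
          (Vhat w * ∏ a ∈ Finset.univ.erase i, ((ξ i + η / 2) ^ 2 - w a ^ 2)) := by ring
    _ = fC N η ξ i *
          (Vhat z * ∏ a ∈ Finset.univ.erase i, ((ξ i - η / 2) ^ 2 - z a ^ 2)) *
          (Vhat (Function.update w i (ξ i + η / 2)) *
            ∏ a ∈ Finset.univ.erase i, ((ξ i - η / 2) ^ 2 - w a ^ 2)) := by rw [e1, ← e2]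
    _ = Vhat z * Vhat (Function.update w i (ξ i + η / 2)) *
          (fC N η ξ i *
            ((∏ a ∈ Finset.univ.erase i, ((ξ i - η / 2) ^ 2 - z a ^ 2)) *
              ∏ a ∈ Finset.univ.erase i, ((ξ i - η / 2) ^ 2 - w a ^ 2))) := by ring
    _ = Vhat z * Vhat (Function.update w i (ξ i + η / 2)) *
          (-∏ a ∈ Finset.univ.erase i,
            (((ξ i + η / 2) ^ 2 - (ξ a + η / 2) ^ 2) * ((ξ i + η / 2) ^ 2 - (ξ a - η / 2) ^ 2))) := by
        rw [e3, e5]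
    _ = -(Vhat z * Vhat (Function.update w i (ξ i + η / 2))) *
          ((∏ a ∈ Finset.univ.erase i, ((ξ i + η / 2) ^ 2 - z a ^ 2)) *
            ∏ a ∈ Finset.univ.erase i, ((ξ i + η / 2) ^ 2 - w a ^ 2)) := by rw [e4]; ring

lemma subsetB (S : Finset (Fin N)) :
    (∏ i ∈ S, fC N η ξ i) * Vhat (fun n => ξ n - η / 2) *
        Vhat (fun a => if a ∈ S then ξ a - η / 2 else ξ a + η / 2)
      = (-1) ^ S.card * Vhat (fun n => ξ n + η / 2) *
        Vhat (fun a => if a ∈ S then ξ a + η / 2 else ξ a - η / 2) := by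
  classical
  induction S using Finset.induction_on with
  | empty => simp [mul_comm]
  | @insert i S hiS ih =>
    set z : Fin N → ℂ := fun a => if a ∈ S then ξ a - η / 2 else ξ a + η / 2 with hzdef
    set w : Fin N → ℂ := fun a => if a ∈ S then ξ a + η / 2 else ξ a - η / 2 with hwdef
    have hz' : (fun a => if a ∈ insert i S then ξ a - η / 2 else ξ a + η / 2)
        = Function.update z i (ξ i - η / 2) := by
      funext a
      by_cases ha : a = i
      · subst ha; simp [Function.update_self, Finset.mem_insert]
      · simp [Function.update_of_ne ha, hzdef, Finset.mem_insert, ha]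
    have hw' : (fun a => if a ∈ insert i S then ξ a + η / 2 else ξ a - η / 2)
        = Function.update w i (ξ i + η / 2) := by
      funext a
      by_cases ha : a = i
      · subst ha; simp [Function.update_self, Finset.mem_insert]
      · simp [Function.update_of_ne ha, hwdef, Finset.mem_insert, ha]
    have hzw : ∀ a, (z a = ξ a + η / 2 ∧ w a = ξ a - η / 2) ∨
        (z a = ξ a - η / 2 ∧ w a = ξ a + η / 2) := by
      intro a
      by_cases ha : a ∈ S
      · exact Or.inr ⟨by simp [hzdef, ha], by simp [hwdef, ha]⟩
      · exact Or.inl ⟨by simp [hzdef, ha], by simp [hwdef, ha]⟩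
    have hzi : z i = ξ i + η / 2 := by simp [hzdef, hiS]
    have hwi : w i = ξ i - η / 2 := by simp [hwdef, hiS]
    have hstep := step_flip hG hzw hzi hwi
    have hVw : Vhat w ≠ 0 := by
      refine vhat_pattern_ne_zero hG fun a => ?_
      rcases hzw a with ⟨-, h⟩ | ⟨-, h⟩
      · exact Or.inr h
      · exact Or.inl h
    rw [hz', hw', Finset.prod_insert hiS, Finset.card_insert_of_notMem hiS]
    apply mul_right_cancel₀ hVw
    calc fC N η ξ i * (∏ i ∈ S, fC N η ξ i) * Vhat (fun n => ξ n - η / 2) *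
          Vhat (Function.update z i (ξ i - η / 2)) * Vhat w
        = (∏ i ∈ S, fC N η ξ i) * Vhat (fun n => ξ n - η / 2) *
            (fC N η ξ i * Vhat (Function.update z i (ξ i - η / 2)) * Vhat w) := by ring
      _ = (∏ i ∈ S, fC N η ξ i) * Vhat (fun n => ξ n - η / 2) *
            (-(Vhat z * Vhat (Function.update w i (ξ i + η / 2)))) := by rw [hstep]
      _ = -Vhat (Function.update w i (ξ i + η / 2)) *
            ((∏ i ∈ S, fC N η ξ i) * Vhat (fun n => ξ n - η / 2) * Vhat z) := by ring
      _ = -Vhat (Function.update w i (ξ i + η / 2)) *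
            ((-1) ^ S.card * Vhat (fun n => ξ n + η / 2) * Vhat w) := by rw [ih]
      _ = (-1) ^ (S.card + 1) * Vhat (fun n => ξ n + η / 2) *
            Vhat (Function.update w i (ξ i + η / 2)) * Vhat w := by ring

end gen

lemma det_expand {N : ℕ} (a b p q : Fin N → ℂ) :
    Matrix.det (Matrix.of fun i j : Fin N =>
        a i * p i ^ (2 * (j : ℕ)) + b i * q i ^ (2 * (j : ℕ)))
      = ∑ s : Finset (Fin N), ((∏ i ∈ s, a i) * (∏ i ∈ sᶜ, b i)) *
          Vhat (fun i => if i ∈ s then p i else q i) := by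
  classical
  set m : Fin N → (Fin N → ℂ) := fun i => a i • fun j : Fin N => p i ^ (2 * (j : ℕ)) with hm
  set m' : Fin N → (Fin N → ℂ) := fun i => b i • fun j : Fin N => q i ^ (2 * (j : ℕ)) with hm'
  have hM : (Matrix.of fun i j : Fin N =>
      a i * p i ^ (2 * (j : ℕ)) + b i * q i ^ (2 * (j : ℕ))) = m + m' := by
    funext i j
    simp [hm, hm', Matrix.of_apply, Pi.add_apply, smul_eq_mul]
  rw [hM]
  have hdet : Matrix.det (m + m')
      = (Matrix.detRowAlternating (R := ℂ) (n := Fin N)).toMultilinearMap (m + m') := rfl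
  rw [hdet, MultilinearMap.map_add_univ]
  refine Finset.sum_congr rfl fun s _ => ?_
  have hpw : s.piecewise m m'
      = fun i => (if i ∈ s then a i else b i) •
          fun j : Fin N => (if i ∈ s then p i else q i) ^ (2 * (j : ℕ)) := by
    funext i
    by_cases hi : i ∈ s
    · simp [Finset.piecewise_eq_of_mem _ _ _ hi, hi, hm]
    · simp [Finset.piecewise_eq_of_notMem _ _ _ hi, hi, hm']
  rw [hpw]
  rw [MultilinearMap.map_smul_univ]
  have hrow : (fun i => fun j : Fin N => (if i ∈ s then p i else q i) ^ (2 * (j : ℕ)))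
      = Matrix.vandermonde (fun i => (if i ∈ s then p i else q i) ^ 2) := by
    funext i j
    rw [Matrix.vandermonde]
    simp [← pow_mul]
  have hV : (Matrix.detRowAlternating (R := ℂ) (n := Fin N)).toMultilinearMap
        (fun i => fun j : Fin N => (if i ∈ s then p i else q i) ^ (2 * (j : ℕ)))
      = Vhat (fun i => if i ∈ s then p i else q i) := by
    rw [hrow]
    have : (Matrix.detRowAlternating (R := ℂ) (n := Fin N)).toMultilinearMap
        (Matrix.vandermonde (fun i => (if i ∈ s then p i else q i) ^ 2))
        = Matrix.det (Matrix.vandermonde (fun i => (if i ∈ s then p i else q i) ^ 2)) := rfl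
    rw [this, Matrix.det_vandermonde]
    rfl
  rw [hV]
  have hcoef : (∏ i, (if i ∈ s then a i else b i)) = (∏ i ∈ s, a i) * ∏ i ∈ sᶜ, b i := by
    rw [← Finset.prod_mul_prod_compl s]
    congr 1
    · exact Finset.prod_congr rfl fun i hi => if_pos hi
    · exact Finset.prod_congr rfl fun i hi => if_neg (Finset.mem_compl.mp hi)
  rw [smul_eq_mul, hcoef]

theorem stmt3 (N : ℕ) (hN : 1 ≤ N) (η : ℂ) (hη : η ≠ 0)
    (ξ : Fin N → ℂ) (hG : GenG N η ξ)
    (c0 c1 g : Fin N → ℂ) :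
    Vhat (fun n => ξ n - η / 2) *
      Matrix.det (Matrix.of fun i j : Fin N =>
        c0 i * (ξ i + η / 2) ^ (2 * (j : ℕ))
          + fC N η ξ i * g i * c1 i * (ξ i - η / 2) ^ (2 * (j : ℕ)))
    = Vhat (fun n => ξ n + η / 2) *
      Matrix.det (Matrix.of fun i j : Fin N =>
        c0 i * (ξ i - η / 2) ^ (2 * (j : ℕ))
          - g i * c1 i * (ξ i + η / 2) ^ (2 * (j : ℕ))) := by
  classical
  have hM2 : (Matrix.of fun i j : Fin N =>
        c0 i * (ξ i - η / 2) ^ (2 * (j : ℕ))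
          - g i * c1 i * (ξ i + η / 2) ^ (2 * (j : ℕ)))
      = (Matrix.of fun i j : Fin N =>
        c0 i * (ξ i - η / 2) ^ (2 * (j : ℕ))
          + (-(g i * c1 i)) * (ξ i + η / 2) ^ (2 * (j : ℕ))) := by
    funext i j
    simp only [Matrix.of_apply]
    ring
  rw [hM2,
    det_expand c0 (fun i => fC N η ξ i * g i * c1 i)
      (fun n => ξ n + η / 2) (fun n => ξ n - η / 2),
    det_expand c0 (fun i => -(g i * c1 i))
      (fun n => ξ n - η / 2) (fun n => ξ n + η / 2),
    Finset.mul_sum, Finset.mul_sum]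
  refine Finset.sum_congr rfl fun s _ => ?_
  have hB := subsetB hG sᶜ
  have hp1 : (fun a => if a ∈ sᶜ then ξ a - η / 2 else ξ a + η / 2)
      = (fun i => if i ∈ s then ξ i + η / 2 else ξ i - η / 2) := by
    funext a
    by_cases h : a ∈ s <;> simp [h]
  have hp2 : (fun a => if a ∈ sᶜ then ξ a + η / 2 else ξ a - η / 2)
      = (fun i => if i ∈ s then ξ i - η / 2 else ξ i + η / 2) := by
    funext a
    by_cases h : a ∈ s <;> simp [h]
  rw [hp1, hp2] at hB
  have hsplit : ∏ i ∈ sᶜ, (fC N η ξ i * g i * c1 i)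
      = (∏ i ∈ sᶜ, fC N η ξ i) * ∏ i ∈ sᶜ, (g i * c1 i) := by
    rw [← Finset.prod_mul_distrib]
    exact Finset.prod_congr rfl fun i _ => by ring
  have hneg : ∏ i ∈ sᶜ, (-(g i * c1 i))
      = (-1) ^ (sᶜ.card) * ∏ i ∈ sᶜ, (g i * c1 i) := by
    rw [← Finset.prod_const (-1 : ℂ), ← Finset.prod_mul_distrib]
    exact Finset.prod_congr rfl fun i _ => by ring
  rw [hsplit, hneg]
  linear_combination ((∏ i ∈ s, c0 i) * ∏ i ∈ sᶜ, (g i * c1 i)) * hB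
end

section
/- Let N ≥ 1 be an integer, η ∈ ℂ∖{0}, and suppose ξ_1,…,ξ_N ∈ ℂ satisfy the genericity condition (G). Let γ be any polynomial in λ² of degree at most N−1 (i.e., γ(λ) = ∑_{m=0}^{N−1} c_m λ^{2m}). Then det_{1≤i,j≤N}[ γ(ξ_i^{(0)}) (ξ_i^{(1)})^{2(j−1)} − γ(ξ_i^{(1)}) (ξ_i^{(0)})^{2(j−1)} ] = 0. In particular, for even polynomials α, β with deg α + deg β < 2N (in λ), taking γ = αβ, the scalar-product determinant det_{1≤i,j≤N}[ α(ξ_i^{(0)})β(ξ_i^{(0)})(ξ_i^{(1)})^{2(j−1)} − α(ξ_i^{(1)})β(ξ_i^{(1)})(ξ_i^{(0)})^{2(j−1)} ] vanishes. -/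
open Finset

/-!
Write `γ(λ) = ∑ₘ cₘ λ^{2m}`, `aᵢ = ξᵢ^{(0)}`, `bᵢ = ξᵢ^{(1)}`. The `i`-th row of the matrix is
`γ(aᵢ) yᵢ - γ(bᵢ) xᵢ` with `xᵢ = (aᵢ^{2j})ⱼ`, `yᵢ = (bᵢ^{2j})ⱼ`, and `γ(aᵢ) = c ⬝ᵥ xᵢ`,
`γ(bᵢ) = c ⬝ᵥ yᵢ`. Pairing the row with `c` gives `γ(aᵢ)γ(bᵢ) - γ(bᵢ)γ(aᵢ) = 0`, so a nonzero `c`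
lies in the kernel (and `c = 0` gives the zero matrix). The second claim is the first for
`γ = αβ`, an even polynomial of degree `< 2N`, hence a polynomial in `λ²` of degree `≤ N - 1`.
-/

open Polynomial

theorem Matrix.det_of_dotProduct_smul_sub_eq_zero {ι R : Type*} [Fintype ι] [DecidableEq ι]
    [Nonempty ι] [CommRing R] [IsDomain R] (c : ι → R) (x y : ι → ι → R) :
    (Matrix.of fun i => (c ⬝ᵥ x i) • y i - (c ⬝ᵥ y i) • x i).det = 0 := by
  obtain rfl | hc := eq_or_ne c 0
  · simp only [zero_dotProduct, zero_smul, sub_zero]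
    exact Matrix.det_zero
  refine Matrix.exists_mulVec_eq_zero_iff.mp ⟨c, hc, funext fun i => ?_⟩
  calc ((c ⬝ᵥ x i) • y i - (c ⬝ᵥ y i) • x i) ⬝ᵥ c
      = (c ⬝ᵥ x i) * (c ⬝ᵥ y i) - (c ⬝ᵥ y i) * (c ⬝ᵥ x i) := by
        rw [sub_dotProduct, smul_dotProduct, smul_dotProduct, dotProduct_comm (y i),
          dotProduct_comm (x i), smul_eq_mul, smul_eq_mul]
    _ = 0 := by ring

theorem Finset.sum_range_two_mul {M : Type*} [AddCommMonoid M] (f : ℕ → M) (N : ℕ) :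
    ∑ k ∈ range (2 * N), f k = ∑ m ∈ range N, (f (2 * m) + f (2 * m + 1)) := by
  induction N with
  | zero => simp
  | succ N ih => rw [Nat.mul_succ, sum_range_succ, sum_range_succ, sum_range_succ, ih, add_assoc]

namespace Polynomial

variable {K : Type*} [Field K] [CharZero K] {p : K[X]}

theorem coeff_eq_zero_of_eval_neg_eq (hp : ∀ x, p.eval (-x) = p.eval x) {n : ℕ} (hn : Odd n) :
    p.coeff n = 0 := by
  have hcomp : p.comp (C (-1) * X) = p := Polynomial.funext fun x => by simp [hp]
  have h := congrArg (coeff · n) hcomp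
  simp only [comp_C_mul_X_coeff, hn.neg_one_pow, mul_neg_one] at h
  exact CharZero.eq_neg_self_iff.mp h.symm

theorem eval_eq_sum_range_of_eval_neg_eq (hp : ∀ x, p.eval (-x) = p.eval x) {N : ℕ}
    (hd : p.natDegree < 2 * N) (x : K) :
    p.eval x = ∑ m ∈ range N, p.coeff (2 * m) * x ^ (2 * m) := by
  rw [eval_eq_sum_range' hd, sum_range_two_mul]
  refine sum_congr rfl fun m _ => ?_
  rw [coeff_eq_zero_of_eval_neg_eq hp (odd_two_mul_add_one m), zero_mul, add_zero]

end Polynomial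

theorem stmt6_general (N : ℕ) (hN : 1 ≤ N) (η : ℂ)
    (ξ : Fin N → ℂ) :
    (∀ c : Fin N → ℂ,
      Matrix.det (Matrix.of fun i j : Fin N =>
          (∑ m, c m * (ξ i + η / 2) ^ (2 * (m : ℕ))) * (ξ i - η / 2) ^ (2 * (j : ℕ))
            - (∑ m, c m * (ξ i - η / 2) ^ (2 * (m : ℕ))) * (ξ i + η / 2) ^ (2 * (j : ℕ)))
        = 0) ∧
    (∀ α β : Polynomial ℂ,
      (∀ x : ℂ, α.eval (-x) = α.eval x) →
      (∀ x : ℂ, β.eval (-x) = β.eval x) →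
      α.natDegree + β.natDegree < 2 * N →
      Matrix.det (Matrix.of fun i j : Fin N =>
          α.eval (ξ i + η / 2) * β.eval (ξ i + η / 2) * (ξ i - η / 2) ^ (2 * (j : ℕ))
            - α.eval (ξ i - η / 2) * β.eval (ξ i - η / 2) * (ξ i + η / 2) ^ (2 * (j : ℕ)))
        = 0) := by
  have : Nonempty (Fin N) := ⟨⟨0, hN⟩⟩
  have hdet (c : Fin N → ℂ) := Matrix.det_of_dotProduct_smul_sub_eq_zero c
    (fun i m => (ξ i + η / 2) ^ (2 * (m : ℕ))) (fun i m => (ξ i - η / 2) ^ (2 * (m : ℕ)))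
  refine ⟨hdet, fun α β hα hβ hdeg => ?_⟩
  have heven : ∀ x : ℂ, (α * β).eval (-x) = (α * β).eval x := by simp [hα, hβ]
  have hsum : ∀ x : ℂ, α.eval x * β.eval x
      = ∑ m : Fin N, (α * β).coeff (2 * (m : ℕ)) * x ^ (2 * (m : ℕ)) := fun x => by
    rw [← eval_mul, eval_eq_sum_range_of_eval_neg_eq heven (natDegree_mul_le.trans_lt hdeg),
      Finset.sum_range fun m => (α * β).coeff (2 * m) * x ^ (2 * m)]
  simp_rw [hsum]
  exact hdet _

theorem stmt6 (N : ℕ) (hN : 1 ≤ N) (η : ℂ) (hη : η ≠ 0)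
    (ξ : Fin N → ℂ) (hG : GenG N η ξ) :
    (∀ c : Fin N → ℂ,
      Matrix.det (Matrix.of fun i j : Fin N =>
          (∑ m, c m * (ξ i + η / 2) ^ (2 * (m : ℕ))) * (ξ i - η / 2) ^ (2 * (j : ℕ))
            - (∑ m, c m * (ξ i - η / 2) ^ (2 * (m : ℕ))) * (ξ i + η / 2) ^ (2 * (j : ℕ)))
        = 0) ∧
    (∀ α β : Polynomial ℂ,
      (∀ x : ℂ, α.eval (-x) = α.eval x) →
      (∀ x : ℂ, β.eval (-x) = β.eval x) →
      α.natDegree + β.natDegree < 2 * N →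
      Matrix.det (Matrix.of fun i j : Fin N =>
          α.eval (ξ i + η / 2) * β.eval (ξ i + η / 2) * (ξ i - η / 2) ^ (2 * (j : ℕ))
            - α.eval (ξ i - η / 2) * β.eval (ξ i - η / 2) * (ξ i + η / 2) ^ (2 * (j : ℕ)))
        = 0) :=
  stmt6_general N hN η ξ
end

section
/- Let N ≥ 1 be an integer, η ∈ ℂ∖{0}, and suppose ξ_1,…,ξ_N ∈ ℂ satisfy the genericity condition (G). Let ζ₊, ζ₋ ∈ ℂ∖{0}, let Q(λ) = ∏_{b=1}^{q}(λ²−λ_b²) and P(λ) = ∏_{b=1}^{p}(λ²−μ_b²), and let t, t' be even polynomials such that for all λ ∈ ℂ: 2λ ζ₊ζ₋ t'(λ) Q(λ) = Â_{ζ₊,ζ₋}(λ) Q(λ−η) − Â_{ζ₊,ζ₋}(−λ) Q(λ+η) and 2λ ζ₊ζ₋ t(λ) P(λ) = Â_{−ζ₊,−ζ₋}(λ) P(λ−η) − Â_{−ζ₊,−ζ₋}(−λ) P(λ+η). Assume t ≠ t' and that t − t' is divisible by 4λ² − η² with quotient a polynomial of degree at most N−1 in λ². Then det_{1≤i,j≤N}[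 Q(ξ_i^{(0)}) P(ξ_i^{(0)}) (ξ_i^{(0)})^{2(j−1)} + f_i Q(ξ_i^{(1)}) P(ξ_i^{(1)}) (ξ_i^{(1)})^{2(j−1)} ] = 0. -/
open Finset

lemma mul_cancel_fun {F G : ℂ → ℂ} (hF : Continuous F) (hG : Continuous G)
    (h : ∀ z : ℂ, z * F z = z * G z) : F 0 = G 0 := by
  have hFG : F = G := by
    refine Continuous.ext_on (dense_compl_singleton (0 : ℂ)) hF hG ?_
    intro z hz
    exact mul_left_cancel₀ (Set.mem_compl_singleton_iff.mp hz) (h z)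
  rw [hFG]

lemma Ahat_neg (N : ℕ) (η : ℂ) (ξ : Fin N → ℂ) (z1 z2 lam : ℂ) :
    Ahat N η (fun n => -ξ n) z1 z2 lam = Ahat N η ξ z1 z2 lam := by
  have hε : ((-1 : ℂ) ^ N) * ((-1 : ℂ) ^ N) = 1 := by
    rw [← mul_pow]; norm_num
  have h1 : aF N η (fun n => -ξ n) lam = (-1 : ℂ) ^ N * dF N η ξ (-lam) := by
    unfold aF dF
    rw [show ((-1 : ℂ) ^ N) = ∏ _n : Fin N, (-1 : ℂ) by
      simp [Finset.prod_const], ← Finset.prod_mul_distrib]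
    exact Finset.prod_congr rfl fun n _ => by ring
  have h2 : dF N η (fun n => -ξ n) (-lam) = (-1 : ℂ) ^ N * aF N η ξ lam := by
    unfold aF dF
    rw [show ((-1 : ℂ) ^ N) = ∏ _n : Fin N, (-1 : ℂ) by
      simp [Finset.prod_const], ← Finset.prod_mul_distrib]
    exact Finset.prod_congr rfl fun n _ => by ring
  unfold Ahat
  rw [h1, h2]
  linear_combination ((-1:ℂ)^N * (2*lam+η) * (lam - η/2 + z1) * (lam - η/2 + z2)
    * dF N η ξ (-lam) * aF N η ξ lam) * hε

lemma DR1 (N : ℕ) (η : ℂ) (ξ : Fin N → ℂ) (i : Fin N)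
    (w z1 z2 : ℂ) (Q : ℂ → ℂ) (hQc : Continuous Q) (hQe : ∀ z : ℂ, Q (-z) = Q z)
    (T : Polynomial ℂ)
    (heq : ∀ lam : ℂ, 2 * lam * w * T.eval lam * Q lam
        = Ahat N η ξ z1 z2 lam * Q (lam - η) - Ahat N η ξ z1 z2 (-lam) * Q (lam + η)) :
    w * T.eval (ξ i - η / 2) * Q (ξ i - η / 2)
      = -η * ((-1 : ℂ) ^ N * (2 * η - 2 * ξ i) * (z1 - ξ i) * (z2 - ξ i))
          * (∏ n ∈ Finset.univ.erase i, ((η - ξ i - ξ n) * (ξ i - ξ n - η)))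
          * Q (ξ i + η / 2) := by
  by_cases hx : ξ i - η / 2 = 0
  · -- special case : ξ i = η/2
    have hxi : ξ i = η / 2 := by linear_combination hx
    have hPAc : Continuous fun z : ℂ => ∏ n ∈ Finset.univ.erase i, (z - ξ n + η / 2) :=
      continuous_finset_prod _ fun n _ => by fun_prop
    have hPA'c : Continuous fun z : ℂ => ∏ n ∈ Finset.univ.erase i, (-z - ξ n + η / 2) :=
      continuous_finset_prod _ fun n _ => by fun_prop
    have hdFc : Continuous fun z : ℂ => dF N η ξ z := by
      unfold dF; exact continuous_finset_prod _ fun n _ => by fun_prop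
    have hTc : Continuous fun z : ℂ => T.eval z := T.continuous
    have key : ∀ z : ℂ, z * (2 * w * T.eval z * Q z)
        = z * (((-1:ℂ)^N * (2*z+η) * (z - η/2 + z1) * (z - η/2 + z2)
                * (∏ n ∈ Finset.univ.erase i, (z - ξ n + η/2)) * dF N η ξ (-z) * Q (z - η))
             + ((-1:ℂ)^N * (2*(-z)+η) * (-z - η/2 + z1) * (-z - η/2 + z2)
                * (∏ n ∈ Finset.univ.erase i, (-z - ξ n + η/2)) * dF N η ξ z * Q (z + η))) := by
      intro z
      have h := heq z
      have ha1 : aF N η ξ z = z * ∏ n ∈ Finset.univ.erase i, (z - ξ n + η/2) := by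
        unfold aF
        rw [← Finset.mul_prod_erase Finset.univ _ (Finset.mem_univ i), hxi,
          show z - η/2 + η/2 = z by ring]
      have ha2 : aF N η ξ (-z) = -z * ∏ n ∈ Finset.univ.erase i, (-z - ξ n + η/2) := by
        unfold aF
        rw [← Finset.mul_prod_erase Finset.univ _ (Finset.mem_univ i), hxi,
          show -z - η/2 + η/2 = -z by ring]
      simp only [Ahat, neg_neg] at h
      rw [ha1, ha2] at h
      linear_combination h
    have hFc : Continuous fun z : ℂ => 2 * w * T.eval z * Q z :=
      (continuous_const.mul hTc).mul hQc
    have hGc : Continuous fun z : ℂ =>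
        ((-1:ℂ)^N * (2*z+η) * (z - η/2 + z1) * (z - η/2 + z2)
                * (∏ n ∈ Finset.univ.erase i, (z - ξ n + η/2)) * dF N η ξ (-z) * Q (z - η))
             + ((-1:ℂ)^N * (2*(-z)+η) * (-z - η/2 + z1) * (-z - η/2 + z2)
                * (∏ n ∈ Finset.univ.erase i, (-z - ξ n + η/2)) * dF N η ξ z * Q (z + η)) := by
      refine Continuous.add ?_ ?_
      · exact (((by fun_prop : Continuous fun z : ℂ =>
            (-1:ℂ)^N * (2*z+η) * (z - η/2 + z1) * (z - η/2 + z2)).mul hPAc).mul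
            (hdFc.comp continuous_neg)).mul (hQc.comp (by fun_prop))
      · exact (((by fun_prop : Continuous fun z : ℂ =>
            (-1:ℂ)^N * (2*(-z)+η) * (-z - η/2 + z1) * (-z - η/2 + z2)).mul hPA'c).mul
            hdFc).mul (hQc.comp (by fun_prop))
    have hFG := mul_cancel_fun hFc hGc key
    have hQm : Q (0 - η) = Q η := by rw [show (0:ℂ) - η = -η by ring, hQe]
    have hQp : Q (0 + η) = Q η := by rw [zero_add]
    have hd0 : dF N η ξ (-0 : ℂ) = dF N η ξ 0 := by rw [neg_zero]
    have hPA0' : (∏ n ∈ Finset.univ.erase i, (-(0:ℂ) - ξ n + η/2))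
        = ∏ n ∈ Finset.univ.erase i, ((0:ℂ) - ξ n + η/2) :=
      Finset.prod_congr rfl fun n _ => by ring
    have ed : dF N η ξ 0 = ((0:ℂ) - ξ i - η/2) * ∏ n ∈ Finset.univ.erase i, ((0:ℂ) - ξ n - η/2) := by
      unfold dF; exact (Finset.mul_prod_erase Finset.univ _ (Finset.mem_univ i)).symm
    rw [hQm, hQp, hd0, hPA0', ed, hxi] at hFG
    rw [hx]
    have eQarg : ξ i + η/2 = η := by rw [hxi]; ring
    rw [eQarg]
    have em : (∏ n ∈ Finset.univ.erase i, ((η - ξ i - ξ n) * (ξ i - ξ n - η)))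
        = (∏ n ∈ Finset.univ.erase i, ((0:ℂ) - ξ n + η/2))
            * (∏ n ∈ Finset.univ.erase i, ((0:ℂ) - ξ n - η/2)) := by
      rw [← Finset.prod_mul_distrib]
      exact Finset.prod_congr rfl fun n _ => by rw [hxi]; ring
    rw [em, hxi]
    linear_combination hFG / 2
  · -- generic case
    have h := heq (ξ i - η/2)
    have ha0 : aF N η ξ (ξ i - η/2) = 0 := by
      unfold aF
      exact Finset.prod_eq_zero (Finset.mem_univ i) (by ring)
    have ham : aF N η ξ (-(ξ i - η/2))
        = (η - 2*ξ i) * ∏ n ∈ Finset.univ.erase i, (-(ξ i - η/2) - ξ n + η/2) := by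
      unfold aF
      rw [← Finset.mul_prod_erase Finset.univ _ (Finset.mem_univ i)]
      congr 1; ring
    have hd : dF N η ξ (ξ i - η/2)
        = (-η) * ∏ n ∈ Finset.univ.erase i, ((ξ i - η/2) - ξ n - η/2) := by
      unfold dF
      rw [← Finset.mul_prod_erase Finset.univ _ (Finset.mem_univ i)]
      congr 1; ring
    have harg : ξ i - η/2 + η = ξ i + η/2 := by ring
    simp only [Ahat, neg_neg] at h
    rw [ha0, ham, hd, harg] at h
    have em : (∏ n ∈ Finset.univ.erase i, ((η - ξ i - ξ n) * (ξ i - ξ n - η)))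
        = (∏ n ∈ Finset.univ.erase i, (-(ξ i - η/2) - ξ n + η/2))
            * (∏ n ∈ Finset.univ.erase i, ((ξ i - η/2) - ξ n - η/2)) := by
      rw [← Finset.prod_mul_distrib]
      exact Finset.prod_congr rfl fun n _ => by ring
    rw [em]
    refine mul_left_cancel₀ hx ?_
    linear_combination h / 2



lemma DR0 (N : ℕ) (η : ℂ) (ξ : Fin N → ℂ) (i : Fin N)
    (w z1 z2 : ℂ) (Q : ℂ → ℂ) (hQc : Continuous Q) (hQe : ∀ z : ℂ, Q (-z) = Q z)
    (T : Polynomial ℂ) (hTe : ∀ z : ℂ, T.eval (-z) = T.eval z)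
    (heq : ∀ lam : ℂ, 2 * lam * w * T.eval lam * Q lam
        = Ahat N η ξ z1 z2 lam * Q (lam - η) - Ahat N η ξ z1 z2 (-lam) * Q (lam + η)) :
    w * T.eval (ξ i + η / 2) * Q (ξ i + η / 2)
      = -η * ((-1 : ℂ) ^ N * (2 * η + 2 * ξ i) * (z1 + ξ i) * (z2 + ξ i))
          * (∏ n ∈ Finset.univ.erase i, ((η + ξ i + ξ n) * (ξ n - ξ i - η)))
          * Q (ξ i - η / 2) := by
  have h := DR1 N η (fun n => -ξ n) i w z1 z2 Q hQc hQe T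
    (fun lam => by rw [Ahat_neg, Ahat_neg]; exact heq lam)
  rw [show -ξ i - η/2 = -(ξ i + η/2) by ring, show -ξ i + η/2 = -(ξ i - η/2) by ring,
    hTe, hQe, hQe] at h
  have em : (∏ n ∈ Finset.univ.erase i, ((η - -ξ i - -ξ n) * (-ξ i - -ξ n - η)))
      = ∏ n ∈ Finset.univ.erase i, ((η + ξ i + ξ n) * (ξ n - ξ i - η)) :=
    Finset.prod_congr rfl fun n _ => by ring
  rw [em] at h
  linear_combination h

lemma CI (N : ℕ) (η : ℂ) (ξ : Fin N → ℂ) (hG : GenG N η ξ) (i : Fin N) :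
    (∏ n ∈ Finset.univ.erase i, ((η + ξ i + ξ n) * (ξ n - ξ i - η)))
      = - fC N η ξ i
          * (∏ n ∈ Finset.univ.erase i, ((η - ξ i - ξ n) * (ξ i - ξ n - η))) := by
  rw [fC, neg_neg, ← Finset.prod_mul_distrib]
  refine Finset.prod_congr rfl fun n hn => ?_
  obtain ⟨hn1, -⟩ := Finset.mem_erase.mp hn
  have h5 := hG.2 i n hn1.symm
  have hd1 : ξ i - ξ n - η ≠ 0 := sub_ne_zero.mpr h5.2.2.2.2.1
  have hd2 : ξ i + ξ n - η ≠ 0 := sub_ne_zero.mpr h5.2.1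
  field_simp
  ring

theorem stmt8 (N : ℕ) (hN : 1 ≤ N) (η : ℂ) (hη : η ≠ 0)
    (ξ : Fin N → ℂ) (hG : GenG N η ξ)
    (ζp ζm : ℂ) (hζp : ζp ≠ 0) (hζm : ζm ≠ 0)
    (q p : ℕ) (lamR : Fin q → ℂ) (muR : Fin p → ℂ)
    (Q P : ℂ → ℂ)
    (hQdef : Q = fun lam => ∏ b, (lam ^ 2 - lamR b ^ 2))
    (hPdef : P = fun lam => ∏ b, (lam ^ 2 - muR b ^ 2))
    (t t' : Polynomial ℂ)
    (hte : ∀ x : ℂ, t.eval (-x) = t.eval x)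
    (ht'e : ∀ x : ℂ, t'.eval (-x) = t'.eval x)
    (hQeq : ∀ lam : ℂ, 2 * lam * ζp * ζm * t'.eval lam * Q lam =
      Ahat N η ξ ζp ζm lam * Q (lam - η)
        - Ahat N η ξ ζp ζm (-lam) * Q (lam + η))
    (hPeq : ∀ lam : ℂ, 2 * lam * ζp * ζm * t.eval lam * P lam =
      Ahat N η ξ (-ζp) (-ζm) lam * P (lam - η)
        - Ahat N η ξ (-ζp) (-ζm) (-lam) * P (lam + η))
    (htt' : t ≠ t')
    (hdiv : ∃ c : Fin N → ℂ, ∀ lam : ℂ,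
      t.eval lam - t'.eval lam
        = (4 * lam ^ 2 - η ^ 2) * ∑ m, c m * lam ^ (2 * (m : ℕ))) :
    Matrix.det (Matrix.of fun i j : Fin N =>
        Q (ξ i + η / 2) * P (ξ i + η / 2) * (ξ i + η / 2) ^ (2 * (j : ℕ))
          + fC N η ξ i * Q (ξ i - η / 2) * P (ξ i - η / 2) * (ξ i - η / 2) ^ (2 * (j : ℕ)))
      = 0 := by
  obtain ⟨c, hc⟩ := hdiv
  have hQc : Continuous Q := by
    rw [hQdef]; exact continuous_finset_prod _ fun b _ => by fun_prop
  have hPc : Continuous P := by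
    rw [hPdef]; exact continuous_finset_prod _ fun b _ => by fun_prop
  have hQe : ∀ z : ℂ, Q (-z) = Q z := fun z => by rw [hQdef]; simp [neg_sq]
  have hPe : ∀ z : ℂ, P (-z) = P z := fun z => by rw [hPdef]; simp [neg_sq]
  have hcne : c ≠ 0 := by
    intro h0
    apply htt'
    apply Polynomial.funext
    intro r
    have h1 := hc r
    rw [h0] at h1
    simp at h1
    linear_combination h1
  rw [← Matrix.exists_mulVec_eq_zero_iff]
  refine ⟨c, hcne, ?_⟩
  funext i
  simp only [Matrix.mulVec, dotProduct, Matrix.of_apply, Pi.zero_apply]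
  have hrow : Q (ξ i + η/2) * P (ξ i + η/2) * (∑ m : Fin N, c m * (ξ i + η/2) ^ (2*(m:ℕ)))
      + fC N η ξ i * Q (ξ i - η/2) * P (ξ i - η/2)
          * (∑ m : Fin N, c m * (ξ i - η/2) ^ (2*(m:ℕ))) = 0 := by
    have hxne : ξ i ≠ 0 := (hG.1 i).1
    have hxmη : ξ i - η ≠ 0 := sub_ne_zero.mpr (hG.1 i).2.1
    have hxpη : ξ i + η ≠ 0 := by
      intro h0; exact (hG.1 i).2.2 (eq_neg_of_add_eq_zero_left h0)
    have dq0 := DR0 N η ξ i (ζp*ζm) ζp ζm Q hQc hQe t' ht'e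
      (fun lam => by linear_combination hQeq lam)
    have dp0 := DR0 N η ξ i (ζp*ζm) (-ζp) (-ζm) P hPc hPe t hte
      (fun lam => by linear_combination hPeq lam)
    have dq1 := DR1 N η ξ i (ζp*ζm) ζp ζm Q hQc hQe t'
      (fun lam => by linear_combination hQeq lam)
    have dp1 := DR1 N η ξ i (ζp*ζm) (-ζp) (-ζm) P hPc hPe t
      (fun lam => by linear_combination hPeq lam)
    have ci := CI N η ξ hG i
    have hS0 := hc (ξ i + η/2)
    have hS1 := hc (ξ i - η/2)
    have key : (4 * ξ i * (ζp*ζm) * (ξ i + η) * (ξ i - η))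
        * (Q (ξ i + η/2) * P (ξ i + η/2) * (∑ m : Fin N, c m * (ξ i + η/2) ^ (2*(m:ℕ)))
          + fC N η ξ i * Q (ξ i - η/2) * P (ξ i - η/2)
              * (∑ m : Fin N, c m * (ξ i - η/2) ^ (2*(m:ℕ)))) = 0 := by
      linear_combination ((ξ i - η) * Q (ξ i + η/2)) * dp0
        - ((ξ i - η) * P (ξ i + η/2)) * dq0
        + (fC N η ξ i * (ξ i + η) * Q (ξ i - η/2)) * dp1
        - (fC N η ξ i * (ξ i + η) * P (ξ i - η/2)) * dq1
        - ((ξ i - η) * (ζp*ζm) * Q (ξ i + η/2) * P (ξ i + η/2)) * hS0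
        - (fC N η ξ i * (ξ i + η) * (ζp*ζm) * Q (ξ i - η/2) * P (ξ i - η/2)) * hS1
        - (2*η*(-1:ℂ)^N*(ξ i + η)*(ξ i - η)
            *((ξ i - ζp)*(ξ i - ζm)*Q (ξ i + η/2)*P (ξ i - η/2)
              - (ξ i + ζp)*(ξ i + ζm)*Q (ξ i - η/2)*P (ξ i + η/2))) * ci
    have hne : (4 * ξ i * (ζp*ζm) * (ξ i + η) * (ξ i - η)) ≠ 0 :=
      mul_ne_zero (mul_ne_zero (mul_ne_zero
        (mul_ne_zero (by norm_num : (4:ℂ) ≠ 0) hxne) (mul_ne_zero hζp hζm)) hxpη) hxmη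
    exact (mul_eq_zero.mp key).resolve_left hne
  calc (∑ j : Fin N, (Q (ξ i + η/2) * P (ξ i + η/2) * (ξ i + η/2) ^ (2*(j:ℕ))
          + fC N η ξ i * Q (ξ i - η/2) * P (ξ i - η/2) * (ξ i - η/2) ^ (2*(j:ℕ))) * c j)
      = Q (ξ i + η/2) * P (ξ i + η/2) * (∑ m : Fin N, c m * (ξ i + η/2) ^ (2*(m:ℕ)))
        + fC N η ξ i * Q (ξ i - η/2) * P (ξ i - η/2)
            * (∑ m : Fin N, c m * (ξ i - η/2) ^ (2*(m:ℕ))) := by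
        rw [Finset.mul_sum, Finset.mul_sum, ← Finset.sum_add_distrib]
        exact Finset.sum_congr rfl fun j _ => by ring
    _ = 0 := hrow
end

section
/- Let N ≥ 1 be an integer, η ∈ ℂ∖{0}, and suppose ξ_1,…,ξ_N ∈ ℂ satisfy the genericity condition (G) and in addition ξ_n ∉ {η/2, −η/2} for all n. Let ζ₊, ζ₋ ∈ ℂ∖{0}, let Q(λ) = ∏_{b=1}^{q}(λ²−λ_b²) and P(λ) = ∏_{b=1}^{p}(λ²−μ_b²), and let t be an even polynomial such that for all λ ∈ ℂ: 2λ ζ₊ζ₋ t(λ) Q(λ) = Â_{ζ₊,ζ₋}(λ) Q(λ−η) − Â_{ζ₊,ζ₋}(−λ) Q(λ+η) and 2λ ζ₊ζ₋ t(λ) P(λ) = Â_{−ζ₊,−ζ₋}(λ) P(λ−η) − Â_{−ζ₊,−ζ₋}(−λ) P(λ+η). Then for every n ∈ {1,…,N}: (ξ_n+ζ₊)(ξ_n+ζ₋) Q(ξ_n^{(1)}) P(ξ_n^{(0)}) = (ξ_n−ζ₊)(ξ_n−ζ₋) P(ξ_n^{(1)}) Q(ξ_n^{(0)}); equivalently,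 whenever Q(ξ_n^{(0)}) P(ξ_n^{(0)}) ≠ 0 and ξ_n ≠ ±ζ₊, ±ζ₋, one has P(ξ_n^{(1)})/P(ξ_n^{(0)}) = g_n · Q(ξ_n^{(1)})/Q(ξ_n^{(0)}). -/
open Finset

/-- `g_n = ((ξ_n+ζ₊)(ξ_n+ζ₋))/((ξ_n−ζ₊)(ξ_n−ζ₋))`. -/
noncomputable def gC (N : ℕ) (ζp ζm : ℂ) (ξ : Fin N → ℂ) (n : Fin N) : ℂ :=
  ((ξ n + ζp) * (ξ n + ζm)) / ((ξ n - ζp) * (ξ n - ζm))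

theorem stmt16 (N : ℕ) (hN : 1 ≤ N) (η : ℂ) (hη : η ≠ 0)
    (ξ : Fin N → ℂ) (hG : GenG N η ξ)
    (hξhalf : ∀ n, ξ n ≠ η / 2 ∧ ξ n ≠ -(η / 2))
    (ζp ζm : ℂ) (hζp : ζp ≠ 0) (hζm : ζm ≠ 0)
    (q p : ℕ) (lamR : Fin q → ℂ) (muR : Fin p → ℂ)
    (Q P : ℂ → ℂ)
    (hQdef : Q = fun lam => ∏ b, (lam ^ 2 - lamR b ^ 2))
    (hPdef : P = fun lam => ∏ b, (lam ^ 2 - muR b ^ 2))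
    (t : Polynomial ℂ) (hte : ∀ x : ℂ, t.eval (-x) = t.eval x)
    (hQeq : ∀ lam : ℂ, 2 * lam * ζp * ζm * t.eval lam * Q lam =
      Ahat N η ξ ζp ζm lam * Q (lam - η)
        - Ahat N η ξ ζp ζm (-lam) * Q (lam + η))
    (hPeq : ∀ lam : ℂ, 2 * lam * ζp * ζm * t.eval lam * P lam =
      Ahat N η ξ (-ζp) (-ζm) lam * P (lam - η)
        - Ahat N η ξ (-ζp) (-ζm) (-lam) * P (lam + η)) :
    ∀ n : Fin N,
      ((ξ n + ζp) * (ξ n + ζm) * Q (ξ n - η / 2) * P (ξ n + η / 2)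
        = (ξ n - ζp) * (ξ n - ζm) * P (ξ n - η / 2) * Q (ξ n + η / 2)) ∧
      (Q (ξ n + η / 2) * P (ξ n + η / 2) ≠ 0 →
        ξ n ≠ ζp → ξ n ≠ -ζp → ξ n ≠ ζm → ξ n ≠ -ζm →
        P (ξ n - η / 2) / P (ξ n + η / 2)
          = gC N ζp ζm ξ n * (Q (ξ n - η / 2) / Q (ξ n + η / 2))) := by
  intro n
  obtain ⟨hG1, hG2⟩ := hG
  have hdz : dF N η ξ (ξ n + η / 2) = 0 :=
    Finset.prod_eq_zero (Finset.mem_univ n) (by ring)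
  have hA1 : Ahat N η ξ ζp ζm (-(ξ n + η / 2)) = 0 := by
    simp [Ahat, neg_neg, hdz]
  have hA2 : Ahat N η ξ (-ζp) (-ζm) (-(ξ n + η / 2)) = 0 := by
    simp [Ahat, neg_neg, hdz]
  have ha : aF N η ξ (ξ n + η / 2) ≠ 0 := by
    rw [aF, Finset.prod_ne_zero_iff]
    intro k _
    by_cases hk : k = n
    · subst hk
      intro h; apply hη; linear_combination h
    · intro h
      exact (hG2 n k (fun h' => hk h'.symm)).2.2.2.2.2 (by linear_combination h)
  have hd : dF N η ξ (-(ξ n + η / 2)) ≠ 0 := by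
    rw [dF, Finset.prod_ne_zero_iff]
    intro k _
    by_cases hk : k = n
    · subst hk
      intro h; exact (hξhalf k).2 (by linear_combination -h / 2)
    · intro h
      exact (hG2 n k (fun h' => hk h'.symm)).2.2.1 (by linear_combination -h)
  have h2 : 2 * (ξ n + η / 2) + η ≠ 0 := by
    intro h
    exact (hG1 n).2.2 (by linear_combination h / 2)
  have hD : (-1 : ℂ) ^ N * (2 * (ξ n + η / 2) + η) * aF N η ξ (ξ n + η / 2)
      * dF N η ξ (-(ξ n + η / 2)) ≠ 0 :=
    mul_ne_zero (mul_ne_zero (mul_ne_zero (pow_ne_zero _ (by norm_num)) h2) ha) hd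
  have harg : ξ n + η / 2 - η = ξ n - η / 2 := by ring
  have eQ := hQeq (ξ n + η / 2)
  have eP := hPeq (ξ n + η / 2)
  rw [hA1, harg] at eQ
  rw [hA2, harg] at eP
  have hAQ : Ahat N η ξ ζp ζm (ξ n + η / 2)
      = ((-1 : ℂ) ^ N * (2 * (ξ n + η / 2) + η) * aF N η ξ (ξ n + η / 2)
        * dF N η ξ (-(ξ n + η / 2))) * ((ξ n + ζp) * (ξ n + ζm)) := by
    rw [Ahat]; ring
  have hAP : Ahat N η ξ (-ζp) (-ζm) (ξ n + η / 2)
      = ((-1 : ℂ) ^ N * (2 * (ξ n + η / 2) + η) * aF N η ξ (ξ n + η / 2)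
        * dF N η ξ (-(ξ n + η / 2))) * ((ξ n - ζp) * (ξ n - ζm)) := by
    rw [Ahat]; ring
  rw [hAQ] at eQ
  rw [hAP] at eP
  have main : (ξ n + ζp) * (ξ n + ζm) * Q (ξ n - η / 2) * P (ξ n + η / 2)
      = (ξ n - ζp) * (ξ n - ζm) * P (ξ n - η / 2) * Q (ξ n + η / 2) := by
    apply mul_left_cancel₀ hD
    linear_combination Q (ξ n + η / 2) * eP - P (ξ n + η / 2) * eQ
  refine ⟨main, ?_⟩
  intro hQP h1 h2' h3 h4
  have hQ0 : Q (ξ n + η / 2) ≠ 0 := fun h => hQP (by rw [h]; ring)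
  have hP0 : P (ξ n + η / 2) ≠ 0 := fun h => hQP (by rw [h]; ring)
  have hzp : ξ n - ζp ≠ 0 := sub_ne_zero.mpr h1
  have hzm : ξ n - ζm ≠ 0 := sub_ne_zero.mpr h3
  rw [gC, div_mul_div_comm,
    div_eq_div_iff hP0 (mul_ne_zero (mul_ne_zero hzp hzm) hQ0)]
  linear_combination -main
end

section
/- Let N ≥ 1 be an integer, η ∈ ℂ∖{0}, and suppose ξ_1,…,ξ_N ∈ ℂ satisfy the genericity condition (G). Then for every tuple h = (h_1,…,h_N) ∈ {0,1}^N one has ∏_{n=1}^N (−f_n)^{h_n} · V̂(ξ_1^{(h_1)},…,ξ_N^{(h_N)}) = (V̂(ξ_1^{(0)},…,ξ_N^{(0)}) / V̂(ξ_1^{(1)},…,ξ_N^{(1)})) · V̂(ξ_1^{(1−h_1)},…,ξ_N^{(1−h_N)}). -/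
open Finset

/-- The per-pair identity underlying the global Vandermonde-ratio identity. -/
lemma pair_id (η a b : ℂ) (hj hk : ℕ) (hj1 : hj ≤ 1) (hk1 : hk ≤ 1)
    (d1 : a - b - η ≠ 0) (d2 : a + b - η ≠ 0) (d3 : b - a - η ≠ 0) (d4 : b + a - η ≠ 0)
    (d5 : b - a ≠ 0) :
    (((a - b + η) * (a + b + η)) / ((a - b - η) * (a + b - η))) ^ hj *
      (((b - a + η) * (b + a + η)) / ((b - a - η) * (b + a - η))) ^ hk *
      ((b + η / 2 - (hk : ℂ) * η) ^ 2 - (a + η / 2 - (hj : ℂ) * η) ^ 2)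
    = ((b + η / 2) ^ 2 - (a + η / 2) ^ 2) / ((b - η / 2) ^ 2 - (a - η / 2) ^ 2) *
      ((b + η / 2 - ((1 - hk : ℕ) : ℂ) * η) ^ 2 - (a + η / 2 - ((1 - hj : ℕ) : ℂ) * η) ^ 2) := by
  have e1 : (b - η / 2) ^ 2 - (a - η / 2) ^ 2 = (b - a) * (b + a - η) := by ring
  interval_cases hj <;> interval_cases hk <;>
    · push_cast
      rw [e1]
      field_simp
      ring

theorem stmt17 (N : ℕ) (hN : 1 ≤ N) (η : ℂ) (hη : η ≠ 0)
    (ξ : Fin N → ℂ) (hG : GenG N η ξ)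
    (h : Fin N → ℕ) (hh : ∀ n, h n ≤ 1) :
    (∏ n, (-(fC N η ξ n)) ^ h n) *
      Vhat (fun n => ξ n + η / 2 - (h n : ℂ) * η)
    = (Vhat (fun n => ξ n + η / 2) / Vhat (fun n => ξ n - η / 2)) *
      Vhat (fun n => ξ n + η / 2 - ((1 - h n : ℕ) : ℂ) * η) := by
  set g : Fin N → Fin N → ℂ := fun n a =>
    ((ξ n - ξ a + η) * (ξ n + ξ a + η)) / ((ξ n - ξ a - η) * (ξ n + ξ a - η)) with hg
  have step1 : (∏ n, (-(fC N η ξ n)) ^ h n)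
      = ∏ j, ∏ k ∈ Finset.Ioi j, (g j k ^ h j * g k j ^ h k) := by
    have key := Finset.prod_prod_Ioi_mul_eq_prod_prod_off_diag
      (f := fun (k j : Fin N) => g j k ^ h j)
    simp only [Finset.compl_singleton] at key
    rw [key]
    apply Finset.prod_congr rfl
    intro n _
    simp only [fC, neg_neg, hg, Finset.prod_pow]
  rw [step1]
  unfold Vhat
  rw [← Finset.prod_mul_distrib, ← Finset.prod_div_distrib, ← Finset.prod_mul_distrib]
  apply Finset.prod_congr rfl
  intro j _
  rw [← Finset.prod_mul_distrib, ← Finset.prod_div_distrib, ← Finset.prod_mul_distrib]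
  apply Finset.prod_congr rfl
  intro k hk
  have hjk : j ≠ k := (Finset.mem_Ioi.mp hk).ne
  obtain ⟨-, hG2⟩ := hG
  obtain ⟨s0, s1, s2, m0, m1, m2⟩ := hG2 j k hjk
  obtain ⟨s0', s1', s2', m0', m1', m2'⟩ := hG2 k j hjk.symm
  simpa [hg] using pair_id η (ξ j) (ξ k) (h j) (h k) (hh j) (hh k)
    (sub_ne_zero.mpr m1) (sub_ne_zero.mpr s1)
    (sub_ne_zero.mpr m1') (sub_ne_zero.mpr s1') m0'
end
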